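/- arXiv:2505.10739 — 3 statements merged into one kernel-verified Lean document; each statement's English description precedes it below -/
import Mathlib

section
/- Let m, n ≥ 1, let Φ¹ ≤ Γ¹ and Φ² ≤ Γ² be integer m×n prefix-bound matrices, let S_P ⊆ S_{m,n}, and let m_P : S_P → ℤ be a partial prescription of entries. Then there exists an integer prefix-bounded matrix A (with respect to Φ¹, Γ¹, Φ², Γ²) with A(i,j) = m_P(i,j) for every (i,j) ∈ S_P if and only if for all X₁, X₂ ⊆ S_{m,n} with X₁ ⊖ X₂ ⊆ S_P the two inequalities p*₁(X₁) + m̃_P(X₂ − X₁) ≤ b*₂(X₂) + m̃_P(X₁ − X₂) and p*₂(X₂) + m̃_P(X₁ − X₂) ≤ b*₁(X₁) + m̃_P(X₂ − X₁) hold. -/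
/-- The set of positions of an m×n matrix, 1-based: S_{m,n} = [m] × [n]. -/
def Smn (m n : ℕ) : Finset (ℕ × ℕ) := Finset.Icc 1 m ×ˢ Finset.Icc 1 n

/-- The horizontal prefix P¹_{i,j} = {(i,1), …, (i,j)}. -/
def hPrefix (i j : ℕ) : Finset (ℕ × ℕ) := {i} ×ˢ Finset.Icc 1 j

/-- The vertical prefix P²_{i,j} = {(1,j), …, (i,j)}. -/
def vPrefix (i j : ℕ) : Finset (ℕ × ℕ) := Finset.Icc 1 i ×ˢ {j}

/-- x̃(X), the sum of the entries of x at the positions in X. -/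
def fsum (x : ℕ × ℕ → ℤ) (X : Finset (ℕ × ℕ)) : ℤ := ∑ s ∈ X, x s

/-- A is a prefix-bounded matrix (PBM) of size m×n with respect to the
horizontal-prefix bounds Φ1 ≤ Γ1 and the vertical-prefix bounds Φ2 ≤ Γ2. -/
def IsPBM (m n : ℕ) (Φ1 Γ1 Φ2 Γ2 : ℕ × ℕ → ℤ) (A : ℕ × ℕ → ℤ) : Prop :=
  ∀ i ∈ Finset.Icc 1 m, ∀ j ∈ Finset.Icc 1 n,
    (Φ1 (i, j) ≤ fsum A (hPrefix i j) ∧ fsum A (hPrefix i j) ≤ Γ1 (i, j)) ∧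
    (Φ2 (i, j) ≤ fsum A (vPrefix i j) ∧ fsum A (vPrefix i j) ≤ Γ2 (i, j))

/-- Starting positions of the maximal horizontal segments of X ⊆ S_{m,n}. -/
def hStarts (X : Finset (ℕ × ℕ)) : Finset (ℕ × ℕ) :=
  X.filter (fun s => (s.1, s.2 - 1) ∉ X)

/-- Ending positions of the maximal horizontal segments of X ⊆ S_{m,n}. -/
def hEnds (X : Finset (ℕ × ℕ)) : Finset (ℕ × ℕ) :=
  X.filter (fun s => (s.1, s.2 + 1) ∉ X)

/-- Starting positions of the maximal vertical segments of X ⊆ S_{m,n}. -/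
def vStarts (X : Finset (ℕ × ℕ)) : Finset (ℕ × ℕ) :=
  X.filter (fun s => (s.1 - 1, s.2) ∉ X)

/-- Ending positions of the maximal vertical segments of X ⊆ S_{m,n}. -/
def vEnds (X : Finset (ℕ × ℕ)) : Finset (ℕ × ℕ) :=
  X.filter (fun s => (s.1 + 1, s.2) ∉ X)

/-- σ₁(X): the number of maximal horizontal segments of X. -/
def sigma1 (X : Finset (ℕ × ℕ)) : ℕ := (hStarts X).card

/-- σ₂(X): the number of maximal vertical segments of X. -/
def sigma2 (X : Finset (ℕ × ℕ)) : ℕ := (vStarts X).card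

/-- p*₁(X) = Σ [Φ¹(i,j₂) − Γ¹(i,j₁−1)] over the maximal horizontal segments
{(i,j₁),…,(i,j₂)} of X, with the convention Γ¹(i,0) = 0. -/
def pstar1 (Φ1 Γ1 : ℕ × ℕ → ℤ) (X : Finset (ℕ × ℕ)) : ℤ :=
  ∑ s ∈ hEnds X, Φ1 s -
    ∑ s ∈ hStarts X, (if s.2 = 1 then 0 else Γ1 (s.1, s.2 - 1))

/-- b*₁(X) = Σ [Γ¹(i,j₂) − Φ¹(i,j₁−1)] over the maximal horizontal segments
{(i,j₁),…,(i,j₂)} of X, with the convention Φ¹(i,0) = 0. -/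
def bstar1 (Φ1 Γ1 : ℕ × ℕ → ℤ) (X : Finset (ℕ × ℕ)) : ℤ :=
  ∑ s ∈ hEnds X, Γ1 s -
    ∑ s ∈ hStarts X, (if s.2 = 1 then 0 else Φ1 (s.1, s.2 - 1))

/-- p*₂(X) = Σ [Φ²(i₂,j) − Γ²(i₁−1,j)] over the maximal vertical segments
{(i₁,j),…,(i₂,j)} of X, with the convention Γ²(0,j) = 0. -/
def pstar2 (Φ2 Γ2 : ℕ × ℕ → ℤ) (X : Finset (ℕ × ℕ)) : ℤ :=
  ∑ s ∈ vEnds X, Φ2 s -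
    ∑ s ∈ vStarts X, (if s.1 = 1 then 0 else Γ2 (s.1 - 1, s.2))

/-- b*₂(X) = Σ [Γ²(i₂,j) − Φ²(i₁−1,j)] over the maximal vertical segments
{(i₁,j),…,(i₂,j)} of X, with the convention Φ²(0,j) = 0. -/
def bstar2 (Φ2 Γ2 : ℕ × ℕ → ℤ) (X : Finset (ℕ × ℕ)) : ℤ :=
  ∑ s ∈ vEnds X, Γ2 s -
    ∑ s ∈ vStarts X, (if s.1 = 1 then 0 else Φ2 (s.1 - 1, s.2))

/-!
A prescribed extension `A` is the same thing as an integral circulation in a network with three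
arcs per cell `(i, j)`: a column arc carrying `Ã(P²_{i,j})` within `[Φ²(i,j), Γ²(i,j)]`, a cell
arc carrying `A(i,j)`, equal to `m_P(i,j)` on `S_P` and within `±M` elsewhere (`M` exceeding all
the data), and a row arc carrying `Ã(P¹_{i,j})` within `[Φ¹(i,j), Γ¹(i,j)]`. By Hoffman's
circulation theorem it exists iff no cut has positive value. A cut crossing a free cell arc has
value at most `-M + (M - 1)`. Any other cut is described by two cell sets `X₁`, `X₂` with
`X₁ ⊖ X₂ ⊆ S_P`: the row arcs it crosses sit at the ends of the maximal horizontal segments of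
`X₁`, the column arcs at those of the vertical segments of `X₂`, and its value is the difference
of the two sides of one of the two inequalities, depending on the side of the sink. Conversely,
the inequalities for a prefix-bounded matrix follow by telescoping prefix sums along the segments.
Column statements are reduced to row statements by transposing.
-/

namespace Circulation

variable {V ι : Type*}

def cutTerm : Bool → Bool → ℤ → ℤ → ℤ
  | false, true, l, _ => l
  | true, false, _, h => -h
  | _, _, _, _ => 0

def cutValue (E : Finset ι) (tl hd : ι → V) (lo hi : ι → ℤ) (K : V → Bool) : ℤ :=
  ∑ e ∈ E, cutTerm (K (tl e)) (K (hd e)) (lo e) (hi e)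

def CutCondition (E : Finset ι) (tl hd : ι → V) (lo hi : ι → ℤ) : Prop :=
  ∀ K : V → Bool, cutValue E tl hd lo hi K ≤ 0

def IsBalanced [DecidableEq V] (E : Finset ι) (tl hd : ι → V) (f : ι → ℤ) : Prop :=
  ∀ v, ∑ e ∈ E with hd e = v, f e = ∑ e ∈ E with tl e = v, f e

def IsCirculation [DecidableEq V] (E : Finset ι) (tl hd : ι → V) (lo hi f : ι → ℤ) : Prop :=
  (∀ e ∈ E, lo e ≤ f e ∧ f e ≤ hi e) ∧ IsBalanced E tl hd f

lemma cutTerm_self (a b : Bool) (x : ℤ) :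
    cutTerm a b x x = (if b then x else 0) - (if a then x else 0) := by
  cases a <;> cases b <;> simp [cutTerm]

lemma cutTerm_not (a b : Bool) (l h : ℤ) : cutTerm (!a) (!b) l h = cutTerm a b (-h) (-l) := by
  cases a <;> cases b <;> simp [cutTerm]

lemma cutTerm_le (a b : Bool) (l h : ℤ) : cutTerm a b l h ≤ max l 0 + max (-h) 0 := by
  cases a <;> cases b <;> simp [cutTerm] <;> omega

lemma cutTerm_swap (a b : Bool) (l h : ℤ) : cutTerm b a l h = cutTerm a b (-h) (-l) := by
  cases a <;> cases b <;> simp [cutTerm]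

lemma cutTerm_add_le (a a' b b' : Bool) {l h : ℤ} (hlh : l ≤ h) :
    cutTerm a b l h + cutTerm a' b' l h ≤
      cutTerm (a || a') (b || b') l h + cutTerm (a && a') (b && b') l h := by
  cases a <;> cases a' <;> cases b <;> cases b' <;> simp [cutTerm] <;> omega

lemma sum_cutTerm {κ : Type*} (S : Finset κ) (a b : κ → Bool) (l h : κ → ℤ) :
    ∑ p ∈ S, cutTerm (a p) (b p) (l p) (h p) =
      ∑ p ∈ S with a p = false ∧ b p = true, l p - ∑ p ∈ S with a p = true ∧ b p = false, h p := by
  rw [Finset.sum_filter, Finset.sum_filter, ← Finset.sum_sub_distrib]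
  refine Finset.sum_congr rfl fun p _ => ?_
  cases a p <;> cases b p <;> simp [cutTerm]

variable {E : Finset ι} {tl hd : ι → V} {lo hi : ι → ℤ}

lemma cutValue_eq_cutValue_not (K : V → Bool) :
    cutValue E tl hd lo hi K = cutValue E tl hd (-hi) (-lo) (fun v => !K v) := by
  simp only [cutValue, cutTerm_not, Pi.neg_apply, neg_neg]

lemma cutValue_self (f : ι → ℤ) (K : V → Bool) :
    cutValue E tl hd f f K = ∑ e ∈ E with K (hd e), f e - ∑ e ∈ E with K (tl e), f e := by
  simp only [cutValue, cutTerm_self, Finset.sum_sub_distrib, Finset.sum_filter]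

lemma cutValue_congr {lo' hi' : ι → ℤ} (hlo : ∀ e ∈ E, lo e = lo' e) (hhi : ∀ e ∈ E, hi e = hi' e)
    (K : V → Bool) : cutValue E tl hd lo hi K = cutValue E tl hd lo' hi' K :=
  Finset.sum_congr rfl fun e he => by rw [hlo e he, hhi e he]

lemma cutValue_sub_cutValue [DecidableEq ι] {lo' hi' : ι → ℤ} {e₀ : ι} (he₀ : e₀ ∈ E)
    (hlo : ∀ e ≠ e₀, lo' e = lo e) (hhi : ∀ e ≠ e₀, hi' e = hi e) (K : V → Bool) :
    cutValue E tl hd lo' hi' K - cutValue E tl hd lo hi K =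
      cutTerm (K (tl e₀)) (K (hd e₀)) (lo' e₀) (hi' e₀) -
        cutTerm (K (tl e₀)) (K (hd e₀)) (lo e₀) (hi e₀) := by
  rw [cutValue, cutValue, ← Finset.add_sum_erase _ _ he₀, ← Finset.add_sum_erase _ _ he₀,
    Finset.sum_congr rfl fun e he => by rw [hlo e (Finset.ne_of_mem_erase he),
      hhi e (Finset.ne_of_mem_erase he)]]
  ring

lemma cutValue_add_cutValue_le [DecidableEq ι] (hle : ∀ e ∈ E, lo e ≤ hi e) {e₀ : ι} (he₀ : e₀ ∈ E)
    {K L : V → Bool} (hK : K (tl e₀) = true ∧ K (hd e₀) = false)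
    (hL : L (tl e₀) = false ∧ L (hd e₀) = true) :
    cutValue E tl hd lo hi K + cutValue E tl hd lo hi L ≤
      cutValue E tl hd lo hi (fun v => K v || L v) + cutValue E tl hd lo hi (fun v => K v && L v) +
        (lo e₀ - hi e₀) := by
  simp only [cutValue, ← Finset.add_sum_erase _ _ he₀, hK, hL]
  have hrest := Finset.sum_le_sum fun e (he : e ∈ E.erase e₀) =>
    cutTerm_add_le (K (tl e)) (L (tl e)) (K (hd e)) (L (hd e)) (hle e (Finset.mem_of_mem_erase he))
  rw [Finset.sum_add_distrib, Finset.sum_add_distrib] at hrest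
  have hcross : cutTerm true false (lo e₀) (hi e₀) + cutTerm false true (lo e₀) (hi e₀) =
      cutTerm true true (lo e₀) (hi e₀) + cutTerm false false (lo e₀) (hi e₀) +
        (lo e₀ - hi e₀) := by
    simp only [cutTerm]; ring
  simp only [Bool.or_false, Bool.false_or, Bool.and_true, Bool.and_false]
  linarith

lemma cutValue_le_cutTerm_add [DecidableEq ι] {e₀ : ι} (he₀ : e₀ ∈ E) (K : V → Bool) :
    cutValue E tl hd lo hi K ≤
      cutTerm (K (tl e₀)) (K (hd e₀)) (lo e₀) (hi e₀) +
        ∑ e ∈ E, (max (lo e) 0 + max (-hi e) 0) := by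
  rw [cutValue, ← Finset.add_sum_erase _ _ he₀]
  gcongr
  calc _ ≤ ∑ e ∈ E.erase e₀, (max (lo e) 0 + max (-hi e) 0) :=
        Finset.sum_le_sum fun e _ => cutTerm_le _ _ _ _
    _ ≤ _ := Finset.sum_le_sum_of_subset_of_nonneg (Finset.erase_subset _ _)
        fun _ _ _ => by positivity

lemma isCirculation_of_tight [DecidableEq V] (htight : ∀ e ∈ E, lo e = hi e)
    (hcut : CutCondition E tl hd lo hi) : IsCirculation E tl hd lo hi lo := by
  refine ⟨fun e he => ⟨le_rfl, (htight e he).le⟩, fun v => ?_⟩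
  have hK := hcut fun w => decide (w = v)
  have hKc := hcut fun w => !decide (w = v)
  rw [cutValue_congr (fun _ _ => rfl) (fun e he => (htight e he).symm), cutValue_self] at hK hKc
  simp only [decide_eq_true_eq, Bool.not_eq_eq_eq_not, Bool.not_true, decide_eq_false_iff_not]
    at hK hKc
  have hin := Finset.sum_filter_add_sum_filter_not E (fun e => hd e = v) lo
  have hout := Finset.sum_filter_add_sum_filter_not E (fun e => tl e = v) lo
  omega

lemma IsCirculation.mono [DecidableEq V] {lo' hi' f : ι → ℤ} (hf : IsCirculation E tl hd lo' hi' f)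
    (hlo : ∀ e ∈ E, lo e ≤ lo' e) (hhi : ∀ e ∈ E, hi' e ≤ hi e) : IsCirculation E tl hd lo hi f :=
  ⟨fun e he => ⟨(hlo e he).trans (hf.1 e he).1, (hf.1 e he).2.trans (hhi e he)⟩, hf.2⟩

open Function in
lemma exists_leaving_cut [DecidableEq ι] {e₀ : ι} (he₀ : e₀ ∈ E)
    (hcut : CutCondition E tl hd lo hi)
    (hnarrow : ¬ CutCondition E tl hd lo (update hi e₀ (hi e₀ - 1))) :
    ∃ K : V → Bool, (K (tl e₀) = true ∧ K (hd e₀) = false) ∧ 0 ≤ cutValue E tl hd lo hi K := by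
  simp only [CutCondition, not_forall, not_le] at hnarrow
  obtain ⟨K, hK⟩ := hnarrow
  have hdiff := cutValue_sub_cutValue (tl := tl) (hd := hd) (lo := lo) (lo' := lo) he₀
    (fun _ _ => rfl) (fun e he => update_of_ne he (hi e₀ - 1) hi) K
  have := hcut K
  rw [update_self] at hdiff
  cases ha : K (tl e₀) <;> cases hb : K (hd e₀) <;> simp only [ha, hb, cutTerm] at hdiff <;>
    first | omega | exact ⟨K, ⟨ha, hb⟩, by omega⟩

open Function in
lemma exists_entering_cut [DecidableEq ι] {e₀ : ι} (he₀ : e₀ ∈ E)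
    (hcut : CutCondition E tl hd lo hi)
    (hnarrow : ¬ CutCondition E tl hd (update lo e₀ (lo e₀ + 1)) hi) :
    ∃ K : V → Bool, (K (tl e₀) = false ∧ K (hd e₀) = true) ∧ 0 ≤ cutValue E tl hd lo hi K := by
  simp only [CutCondition, not_forall, not_le] at hnarrow
  obtain ⟨K, hK⟩ := hnarrow
  have hdiff := cutValue_sub_cutValue (tl := tl) (hd := hd) (hi := hi) (hi' := hi) he₀
    (fun e he => update_of_ne he (lo e₀ + 1) lo) (fun _ _ => rfl) K
  have := hcut K
  rw [update_self] at hdiff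
  cases ha : K (tl e₀) <;> cases hb : K (hd e₀) <;> simp only [ha, hb, cutTerm] at hdiff <;>
    first | omega | exact ⟨K, ⟨ha, hb⟩, by omega⟩

lemma sum_toNat_lt_sum_toNat {lo' hi' : ι → ℤ} (hb : ∀ e ∈ E, lo e ≤ lo' e ∧ hi' e ≤ hi e)
    {e₀ : ι} (he₀ : e₀ ∈ E) (hlt : hi' e₀ - lo' e₀ < hi e₀ - lo e₀) (hle : lo' e₀ ≤ hi' e₀) :
    ∑ e ∈ E, (hi' e - lo' e).toNat < ∑ e ∈ E, (hi e - lo e).toNat :=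
  Finset.sum_lt_sum (fun e he => by have := hb e he; omega) ⟨e₀, he₀, by omega⟩

/-- Hoffman's circulation theorem, by induction on the total slack: if neither lowering `hi e₀`
nor raising `lo e₀` preserves the cut condition, the two violated cuts have value `0` and cross
at `e₀`, and uncrossing them produces a cut of positive value. -/
theorem exists_isCirculation [DecidableEq V] (hle : ∀ e ∈ E, lo e ≤ hi e)
    (hcut : CutCondition E tl hd lo hi) : ∃ f, IsCirculation E tl hd lo hi f := by
  classical
  induction hN : ∑ e ∈ E, (hi e - lo e).toNat using Nat.strong_induction_on
    generalizing lo hi with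
  | _ N ih =>
  by_cases htight : ∀ e ∈ E, lo e = hi e
  · exact ⟨lo, isCirculation_of_tight htight hcut⟩
  push Not at htight
  obtain ⟨e₀, he₀, hne⟩ := htight
  have hlt : lo e₀ < hi e₀ := (hle e₀ he₀).lt_of_ne hne
  have of_narrower (lo' hi' : ι → ℤ) (hb : ∀ e ∈ E, lo e ≤ lo' e ∧ lo' e ≤ hi' e ∧ hi' e ≤ hi e)
      (hlt' : hi' e₀ - lo' e₀ < hi e₀ - lo e₀) (hcut' : CutCondition E tl hd lo' hi') :
      ∃ f, IsCirculation E tl hd lo hi f := by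
    have hb' e he : lo e ≤ lo' e ∧ hi' e ≤ hi e := ⟨(hb e he).1, (hb e he).2.2⟩
    obtain ⟨f, hf⟩ := ih _ (hN ▸ sum_toNat_lt_sum_toNat hb' he₀ hlt' (hb e₀ he₀).2.1)
      (fun e he => (hb e he).2.1) hcut' rfl
    exact ⟨f, hf.mono (fun e he => (hb' e he).1) fun e he => (hb' e he).2⟩
  by_cases hhi : CutCondition E tl hd lo (Function.update hi e₀ (hi e₀ - 1))
  · refine of_narrower lo _ (fun e he => ?_) (by simp) hhi
    rcases eq_or_ne e e₀ with rfl | h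
    · simp only [Function.update_self]; omega
    · simp [Function.update_of_ne h, hle e he]
  by_cases hlo : CutCondition E tl hd (Function.update lo e₀ (lo e₀ + 1)) hi
  · refine of_narrower _ hi (fun e he => ?_) (by simp) hlo
    rcases eq_or_ne e e₀ with rfl | h
    · simp only [Function.update_self]; omega
    · simp [Function.update_of_ne h, hle e he]
  obtain ⟨K, hK, hK₀⟩ := exists_leaving_cut he₀ hcut hhi
  obtain ⟨L, hL, hL₀⟩ := exists_entering_cut he₀ hcut hlo
  have := cutValue_add_cutValue_le hle he₀ hK hL
  have := hcut fun v => K v || L v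
  have := hcut fun v => K v && L v
  omega

end Circulation

namespace PrefixBounded

open Circulation

lemma mem_Smn {m n : ℕ} {p : ℕ × ℕ} : p ∈ Smn m n ↔ 1 ≤ p.1 ∧ p.1 ≤ m ∧ 1 ≤ p.2 ∧ p.2 ≤ n := by
  simp [Smn, and_assoc]

section Rows

variable {m n : ℕ} {X : Finset (ℕ × ℕ)}

lemma sum_filter_right_mem (hX : X ⊆ Smn m n) (P : ℕ × ℕ → Prop) [DecidablePred P]
    (g : ℕ × ℕ → ℤ) :
    ∑ p ∈ Smn m n with (p.1, p.2 + 1) ∈ X ∧ P p, g p =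
      ∑ s ∈ X with s.2 ≠ 1 ∧ P (s.1, s.2 - 1), g (s.1, s.2 - 1) := by
  refine Finset.sum_nbij' (fun p => (p.1, p.2 + 1)) (fun s => (s.1, s.2 - 1)) ?_ ?_ ?_ ?_ ?_
  · intro p hp
    simp only [Finset.mem_filter, mem_Smn] at hp ⊢
    simpa [show p.2 ≠ 0 by omega] using hp.2
  · intro s hs
    simp only [Finset.mem_filter, mem_Smn] at hs ⊢
    have := mem_Smn.1 (hX hs.1)
    refine ⟨⟨by omega, by omega, by omega, by omega⟩, ?_, hs.2.2⟩
    rw [Nat.sub_add_cancel (by omega)]; exact hs.1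
  · intro p _; simp
  · intro s hs
    simp only [Finset.mem_filter] at hs
    have := mem_Smn.1 (hX hs.1)
    exact Prod.ext rfl (Nat.sub_add_cancel (by omega))
  · intro p _; rfl

lemma sum_hStarts (g : ℕ × ℕ → ℤ) :
    ∑ s ∈ hStarts X, (if s.2 = 1 then 0 else g (s.1, s.2 - 1)) =
      ∑ s ∈ X with s.2 ≠ 1 ∧ (s.1, s.2 - 1) ∉ X, g (s.1, s.2 - 1) := by
  rw [hStarts, Finset.sum_ite, Finset.sum_const_zero, zero_add, Finset.filter_filter]
  exact Finset.sum_congr (Finset.filter_congr fun _ _ => and_comm) fun _ _ => rfl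

lemma filter_Smn_mem_and (hX : X ⊆ Smn m n) (P : ℕ × ℕ → Prop) [DecidablePred P] :
    {p ∈ Smn m n | p ∈ X ∧ P p} = {p ∈ X | P p} := by
  ext p; simp only [Finset.mem_filter]; exact ⟨fun h => h.2, fun h => ⟨hX h.1, h⟩⟩

lemma sum_cutTerm_row (hX : X ⊆ Smn m n) (r s : ℕ × ℕ → ℤ) :
    ∑ p ∈ Smn m n, cutTerm (decide (p ∈ X)) (decide ((p.1, p.2 + 1) ∈ X)) (r p) (s p) =
      -bstar1 r s X := by
  simp only [sum_cutTerm, decide_eq_false_iff_not, decide_eq_true_eq]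
  rw [Finset.filter_congr fun p _ => and_comm, sum_filter_right_mem hX, filter_Smn_mem_and hX,
    bstar1, hEnds, sum_hStarts]
  ring

lemma fsum_hPrefix_succ (A : ℕ × ℕ → ℤ) (i j : ℕ) :
    fsum A (hPrefix i (j + 1)) = fsum A (hPrefix i j) + A (i, j + 1) := by
  simp [fsum, hPrefix, Finset.sum_Icc_succ_top]

lemma eq_fsum_hPrefix {F : ℕ → ℤ} {g : ℕ × ℕ → ℤ} {i n : ℕ} (h₀ : F 0 = 0)
    (hstep : ∀ q < n, F q + g (i, q + 1) = F (q + 1)) : ∀ j ≤ n, F j = fsum g (hPrefix i j)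
  | 0, _ => by simp [h₀, fsum, hPrefix]
  | j + 1, hj => by
    rw [← hstep j hj, eq_fsum_hPrefix h₀ hstep j (by omega), fsum_hPrefix_succ]

lemma fsum_eq_bstar1 (A : ℕ × ℕ → ℤ) (hX : X ⊆ Smn m n) :
    fsum A X =
      bstar1 (fun p => fsum A (hPrefix p.1 p.2)) (fun p => fsum A (hPrefix p.1 p.2)) X := by
  set R : ℕ × ℕ → ℤ := fun p => fsum A (hPrefix p.1 p.2)
  have hshift : ∑ s ∈ X, R (s.1, s.2 - 1) = ∑ p ∈ Smn m n with (p.1, p.2 + 1) ∈ X, R p := by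
    have := sum_filter_right_mem hX (fun _ => True) R
    simp only [and_true] at this
    rw [this, Finset.sum_filter]
    refine Finset.sum_congr rfl fun s _ => ?_
    split_ifs with h
    · rfl
    · simp [R, not_not.1 h, fsum, hPrefix]
  have hrow := sum_cutTerm_row hX R R
  simp only [cutTerm_self, Finset.sum_sub_distrib, ← Finset.sum_filter, decide_eq_true_eq] at hrow
  rw [Finset.filter_mem_eq_inter, Finset.inter_eq_right.2 hX, ← hshift] at hrow
  have hA : ∑ s ∈ X, R s = ∑ s ∈ X, R (s.1, s.2 - 1) + fsum A X := by
    rw [fsum, ← Finset.sum_add_distrib]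
    refine Finset.sum_congr rfl fun ⟨i, j⟩ hs => ?_
    obtain ⟨j, rfl⟩ : ∃ k, j = k + 1 := ⟨j - 1, by have := (mem_Smn.1 (hX hs)).2.2.1; dsimp only at this; omega⟩
    exact fsum_hPrefix_succ A i j
  linarith

lemma pstar1_neg (Φ Γ : ℕ × ℕ → ℤ) (X : Finset (ℕ × ℕ)) :
    pstar1 (-Γ) (-Φ) X = -bstar1 Φ Γ X := by
  have h (c : Prop) [Decidable c] (x : ℤ) : (if c then 0 else -x) = -(if c then 0 else x) := by
    split_ifs <;> simp
  simp only [pstar1, bstar1, Pi.neg_apply, Finset.sum_neg_distrib, h]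
  ring

lemma bstar1_neg (Φ Γ : ℕ × ℕ → ℤ) (X : Finset (ℕ × ℕ)) :
    bstar1 (-Γ) (-Φ) X = -pstar1 Φ Γ X := by
  simpa using (congrArg Neg.neg (pstar1_neg (-Γ) (-Φ) X)).symm

lemma pstar1_mono {Φ Γ Φ' Γ' : ℕ × ℕ → ℤ} (hΦ : ∀ s ∈ X, Φ s ≤ Φ' s)
    (hΓ : ∀ s ∈ X, s.2 ≠ 1 → Γ' (s.1, s.2 - 1) ≤ Γ (s.1, s.2 - 1)) :
    pstar1 Φ Γ X ≤ pstar1 Φ' Γ' X :=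
  sub_le_sub (Finset.sum_le_sum fun s hs => hΦ s (Finset.filter_subset _ _ hs))
    (Finset.sum_le_sum fun s hs => by
      split_ifs with h
      · rfl
      · exact hΓ s (Finset.filter_subset _ _ hs) h)

lemma bstar1_mono {Φ Γ Φ' Γ' : ℕ × ℕ → ℤ} (hΓ : ∀ s ∈ X, Γ s ≤ Γ' s)
    (hΦ : ∀ s ∈ X, s.2 ≠ 1 → Φ' (s.1, s.2 - 1) ≤ Φ (s.1, s.2 - 1)) :
    bstar1 Φ Γ X ≤ bstar1 Φ' Γ' X := by
  rw [← neg_neg (bstar1 Φ Γ X), ← neg_neg (bstar1 Φ' Γ' X), ← pstar1_neg, ← pstar1_neg,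
    neg_le_neg_iff]
  exact pstar1_mono (fun s hs => neg_le_neg (hΓ s hs)) fun s hs h => neg_le_neg (hΦ s hs h)

lemma pstar1_le_fsum_le_bstar1 {Φ Γ A : ℕ × ℕ → ℤ} (hX : X ⊆ Smn m n)
    (hA : ∀ p ∈ Smn m n, Φ p ≤ fsum A (hPrefix p.1 p.2) ∧ fsum A (hPrefix p.1 p.2) ≤ Γ p) :
    pstar1 Φ Γ X ≤ fsum A X ∧ fsum A X ≤ bstar1 Φ Γ X := by
  have hprev s (hs : s ∈ X) (h : s.2 ≠ 1) : (s.1, s.2 - 1) ∈ Smn m n := by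
    have := mem_Smn.1 (hX hs); exact mem_Smn.2 ⟨by omega, by omega, by omega, by omega⟩
  set R : ℕ × ℕ → ℤ := fun p => fsum A (hPrefix p.1 p.2)
  have hpb : pstar1 R R X = bstar1 R R X := rfl
  rw [fsum_eq_bstar1 A hX]
  exact ⟨hpb ▸ pstar1_mono (fun s hs => (hA s (hX hs)).1) fun s hs h => (hA _ (hprev s hs h)).2,
    bstar1_mono (fun s hs => (hA s (hX hs)).2) fun s hs h => (hA _ (hprev s hs h)).1⟩

end Rows

section Transpose

def transpose (X : Finset (ℕ × ℕ)) : Finset (ℕ × ℕ) := X.map (Equiv.prodComm ℕ ℕ).toEmbedding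

@[simp] lemma mem_transpose {X : Finset (ℕ × ℕ)} {p : ℕ × ℕ} : p ∈ transpose X ↔ p.swap ∈ X := by
  simp [transpose, Finset.mem_map_equiv]

lemma transpose_Smn (m n : ℕ) : transpose (Smn m n) = Smn n m := by
  ext p
  simp only [mem_transpose, mem_Smn, Prod.fst_swap, Prod.snd_swap]
  omega

lemma transpose_subset_Smn {m n : ℕ} {X : Finset (ℕ × ℕ)} (hX : X ⊆ Smn m n) :
    transpose X ⊆ Smn n m := by
  rw [← transpose_Smn]; exact Finset.map_subset_map.2 hX

lemma sum_transpose (X : Finset (ℕ × ℕ)) (g : ℕ × ℕ → ℤ) :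
    ∑ p ∈ transpose X, g p = ∑ p ∈ X, g p.swap := Finset.sum_map _ _ _

lemma vEnds_eq (X : Finset (ℕ × ℕ)) : vEnds X = transpose (hEnds (transpose X)) := by
  ext p; simp [vEnds, hEnds]

lemma vStarts_eq (X : Finset (ℕ × ℕ)) : vStarts X = transpose (hStarts (transpose X)) := by
  ext p; simp [vStarts, hStarts]

lemma pstar2_eq (Φ Γ : ℕ × ℕ → ℤ) (X : Finset (ℕ × ℕ)) :
    pstar2 Φ Γ X = pstar1 (Φ ∘ Prod.swap) (Γ ∘ Prod.swap) (transpose X) := by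
  simp [pstar2, pstar1, vEnds_eq, vStarts_eq, sum_transpose]

lemma bstar2_eq (Φ Γ : ℕ × ℕ → ℤ) (X : Finset (ℕ × ℕ)) :
    bstar2 Φ Γ X = bstar1 (Φ ∘ Prod.swap) (Γ ∘ Prod.swap) (transpose X) := by
  simp [bstar2, bstar1, vEnds_eq, vStarts_eq, sum_transpose]

lemma pstar2_neg (Φ Γ : ℕ × ℕ → ℤ) (X : Finset (ℕ × ℕ)) :
    pstar2 (-Γ) (-Φ) X = -bstar2 Φ Γ X := by
  rw [pstar2_eq, bstar2_eq]; exact pstar1_neg _ _ _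

lemma fsum_transpose (A : ℕ × ℕ → ℤ) (X : Finset (ℕ × ℕ)) :
    fsum A X = fsum (A ∘ Prod.swap) (transpose X) := by
  simp [fsum, sum_transpose]

lemma vPrefix_eq (i j : ℕ) : vPrefix i j = transpose (hPrefix j i) := by
  ext p
  simp only [vPrefix, hPrefix, mem_transpose, Finset.mem_product, Prod.fst_swap, Prod.snd_swap]
  exact and_comm

lemma sum_cutTerm_col {m n : ℕ} {X : Finset (ℕ × ℕ)} (hX : X ⊆ Smn m n) (r s : ℕ × ℕ → ℤ) :
    ∑ p ∈ Smn m n, cutTerm (decide ((p.1 + 1, p.2) ∈ X)) (decide (p ∈ X)) (r p) (s p) =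
      pstar2 r s X := by
  rw [← transpose_Smn n m, sum_transpose, pstar2_eq, ← neg_neg (pstar1 _ _ _), ← bstar1_neg,
    ← sum_cutTerm_row (transpose_subset_Smn hX)]
  refine Finset.sum_congr rfl fun q _ => ?_
  rw [cutTerm_swap]
  simp

end Transpose

section Forward

variable {m n : ℕ} {Φ1 Γ1 Φ2 Γ2 A : ℕ × ℕ → ℤ}

lemma pstar2_le_fsum_le_bstar2 {X : Finset (ℕ × ℕ)} (hX : X ⊆ Smn m n)
    (hA : ∀ p ∈ Smn m n, Φ2 p ≤ fsum A (vPrefix p.1 p.2) ∧ fsum A (vPrefix p.1 p.2) ≤ Γ2 p) :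
    pstar2 Φ2 Γ2 X ≤ fsum A X ∧ fsum A X ≤ bstar2 Φ2 Γ2 X := by
  rw [pstar2_eq, bstar2_eq, fsum_transpose]
  refine pstar1_le_fsum_le_bstar1 (transpose_subset_Smn hX) fun q hq => ?_
  rw [← transpose_Smn, mem_transpose] at hq
  simpa [vPrefix_eq, fsum, sum_transpose] using hA q.swap hq

theorem segment_inequalities_of_isPBM (hA : IsPBM m n Φ1 Γ1 Φ2 Γ2 A) {SP : Finset (ℕ × ℕ)}
    {mP : ℕ × ℕ → ℤ} (hAP : ∀ s ∈ SP, A s = mP s) {X₁ X₂ : Finset (ℕ × ℕ)}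
    (hX₁ : X₁ ⊆ Smn m n) (hX₂ : X₂ ⊆ Smn m n) (hP : X₁ \ X₂ ∪ X₂ \ X₁ ⊆ SP) :
    (pstar1 Φ1 Γ1 X₁ + fsum mP (X₂ \ X₁) ≤ bstar2 Φ2 Γ2 X₂ + fsum mP (X₁ \ X₂)) ∧
      (pstar2 Φ2 Γ2 X₂ + fsum mP (X₁ \ X₂) ≤ bstar1 Φ1 Γ1 X₁ + fsum mP (X₂ \ X₁)) := by
  have hApply p (hp : p ∈ Smn m n) :=
    hA p.1 (Finset.mem_product.1 hp).1 p.2 (Finset.mem_product.1 hp).2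
  have hrow := pstar1_le_fsum_le_bstar1 hX₁ fun p hp => (hApply p hp).1
  have hcol := pstar2_le_fsum_le_bstar2 hX₂ fun p hp => (hApply p hp).2
  have h₁₂ : fsum A (X₁ \ X₂) = fsum mP (X₁ \ X₂) :=
    Finset.sum_congr rfl fun s hs => hAP s (hP (Finset.mem_union_left _ hs))
  have h₂₁ : fsum A (X₂ \ X₁) = fsum mP (X₂ \ X₁) :=
    Finset.sum_congr rfl fun s hs => hAP s (hP (Finset.mem_union_right _ hs))
  have hdiff : fsum A (X₂ \ X₁) - fsum A (X₁ \ X₂) = fsum A X₂ - fsum A X₁ :=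
    Finset.sum_sdiff_sub_sum_sdiff
  constructor <;> linarith

end Forward

section Network

/- Flow leaves the sink along the columns, passes into the rows through the cell arcs and returns
to the sink along the rows. `rowNode n i q` joins row `i` between columns `q` and `q + 1`: the row
arc of `(i, q)` and the cell arc of `(i, q + 1)` enter it, the row arc of `(i, q + 1)` leaves it.
`colNode m p j` joins column `j` between rows `p` and `p + 1`: the column arc of `(p + 1, j)`
enters it, the column arc of `(p, j)` and the cell arc of `(p + 1, j)` leave it. The index `n`,
resp. `m`, stands for the sink. -/
inductive Node
  | row (i q : ℕ)
  | col (p j : ℕ)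
  | sink
  deriving DecidableEq

inductive ArcKind
  | row
  | col
  | cell
  deriving DecidableEq

abbrev Arc := ArcKind × (ℕ × ℕ)

def rowNode (n i q : ℕ) : Node := if q = n then .sink else .row i q

def colNode (m p j : ℕ) : Node := if p = m then .sink else .col p j

def arcs (m n : ℕ) : Finset Arc := {.row, .col, .cell} ×ˢ Smn m n

def tail (m n : ℕ) : Arc → Node
  | (.row, p) => rowNode n p.1 (p.2 - 1)
  | (.col, p) => colNode m p.1 p.2
  | (.cell, p) => colNode m (p.1 - 1) p.2

def head (m n : ℕ) : Arc → Node
  | (.row, p) => rowNode n p.1 p.2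
  | (.col, p) => colNode m (p.1 - 1) p.2
  | (.cell, p) => rowNode n p.1 (p.2 - 1)

def arcBound (r c x : ℕ × ℕ → ℤ) : Arc → ℤ
  | (.row, p) => r p
  | (.col, p) => c p
  | (.cell, p) => x p

variable {m n : ℕ}

lemma mem_arcs {e : Arc} : e ∈ arcs m n ↔ e.2 ∈ Smn m n := by
  obtain ⟨k, p⟩ := e
  cases k <;> simp [arcs]

lemma sum_arcs (g : Arc → ℤ) :
    ∑ e ∈ arcs m n, g e =
      ∑ p ∈ Smn m n, g (.row, p) + ∑ p ∈ Smn m n, g (.col, p) + ∑ p ∈ Smn m n, g (.cell, p) := by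
  rw [arcs, Finset.sum_product, Finset.sum_insert (by decide), Finset.sum_insert (by decide),
    Finset.sum_singleton, add_assoc]

lemma neg_arcBound (r c x : ℕ × ℕ → ℤ) : -arcBound r c x = arcBound (-r) (-c) (-x) := by
  funext ⟨k, p⟩; cases k <;> rfl

/- The cell sets `X₁`, `X₂` of a cut `K`: the cells whose cell arc has its head, resp. tail, on the
other side of `K` from the sink. -/
def rowCut (m n : ℕ) (K : Node → Bool) : Finset (ℕ × ℕ) :=
  {p ∈ Smn m n | K (rowNode n p.1 (p.2 - 1)) ≠ K .sink}

def colCut (m n : ℕ) (K : Node → Bool) : Finset (ℕ × ℕ) :=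
  {p ∈ Smn m n | K (colNode m (p.1 - 1) p.2) ≠ K .sink}

lemma rowCut_subset (K : Node → Bool) : rowCut m n K ⊆ Smn m n := Finset.filter_subset _ _

lemma colCut_subset (K : Node → Bool) : colCut m n K ⊆ Smn m n := Finset.filter_subset _ _

lemma rowCut_not (K : Node → Bool) : rowCut m n (fun v => !K v) = rowCut m n K := by
  simp [rowCut]

lemma colCut_not (K : Node → Bool) : colCut m n (fun v => !K v) = colCut m n K := by
  simp [colCut]

lemma apply_rowNode {K : Node → Bool} (hK : K .sink = false) {i q : ℕ} (hi : 1 ≤ i ∧ i ≤ m)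
    (hq : q ≤ n) : K (rowNode n i q) = decide ((i, q + 1) ∈ rowCut m n K) := by
  by_cases h : q = n
  · simp [rowNode, rowCut, h, hK, mem_Smn]
  · have : (i, q + 1) ∈ Smn m n := mem_Smn.2 ⟨hi.1, hi.2, by omega, by omega⟩
    simp [rowNode, rowCut, h, hK, this]

lemma apply_colNode {K : Node → Bool} (hK : K .sink = false) {p j : ℕ} (hp : p ≤ m)
    (hj : 1 ≤ j ∧ j ≤ n) : K (colNode m p j) = decide ((p + 1, j) ∈ colCut m n K) := by
  by_cases h : p = m
  · simp [colNode, colCut, h, hK, mem_Smn]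
  · have : (p + 1, j) ∈ Smn m n := mem_Smn.2 ⟨by omega, by omega, hj.1, hj.2⟩
    simp [colNode, colCut, h, hK, this]

lemma sum_cutTerm_cell {X₁ X₂ : Finset (ℕ × ℕ)} (hX₁ : X₁ ⊆ Smn m n) (hX₂ : X₂ ⊆ Smn m n)
    (r s : ℕ × ℕ → ℤ) :
    ∑ p ∈ Smn m n, cutTerm (decide (p ∈ X₂)) (decide (p ∈ X₁)) (r p) (s p) =
      fsum r (X₁ \ X₂) - fsum s (X₂ \ X₁) := by
  have h {Y Z : Finset (ℕ × ℕ)} (hY : Y ⊆ Smn m n) : {p ∈ Smn m n | p ∉ Z ∧ p ∈ Y} = Y \ Z := by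
    ext p; simp only [Finset.mem_filter, Finset.mem_sdiff]
    exact ⟨fun h => ⟨h.2.2, h.2.1⟩, fun h => ⟨hY h.1, h.2, h.1⟩⟩
  simp only [sum_cutTerm, decide_eq_false_iff_not, decide_eq_true_eq]
  rw [h hX₁, Finset.filter_congr fun p _ => and_comm, h hX₂, fsum, fsum]

lemma cutValue_arcBound {K : Node → Bool} (hK : K .sink = false) (r₁ r₂ r₃ s₁ s₂ s₃ : ℕ × ℕ → ℤ) :
    cutValue (arcs m n) (tail m n) (head m n) (arcBound r₁ r₂ r₃) (arcBound s₁ s₂ s₃) K =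
      -bstar1 r₁ s₁ (rowCut m n K) + pstar2 r₂ s₂ (colCut m n K) +
        (fsum r₃ (rowCut m n K \ colCut m n K) - fsum s₃ (colCut m n K \ rowCut m n K)) := by
  rw [cutValue, sum_arcs, ← sum_cutTerm_row (rowCut_subset K), ← sum_cutTerm_col (colCut_subset K),
    ← sum_cutTerm_cell (rowCut_subset K) (colCut_subset K)]
  congr 1; congr 1
  all_goals refine Finset.sum_congr rfl fun p hp => ?_
  all_goals obtain ⟨hi₁, hi₂, hj₁, hj₂⟩ := mem_Smn.1 hp
  all_goals simp only [tail, head, arcBound]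
  · rw [apply_rowNode hK ⟨hi₁, hi₂⟩ (by omega), apply_rowNode hK ⟨hi₁, hi₂⟩ hj₂,
      Nat.sub_add_cancel hj₁]
  · rw [apply_colNode hK hi₂ ⟨hj₁, hj₂⟩, apply_colNode hK (by omega) ⟨hj₁, hj₂⟩,
      Nat.sub_add_cancel hi₁]
  · rw [apply_rowNode hK ⟨hi₁, hi₂⟩ (by omega), apply_colNode hK (by omega) ⟨hj₁, hj₂⟩,
      Nat.sub_add_cancel hi₁, Nat.sub_add_cancel hj₁]

def cellBound (SP : Finset (ℕ × ℕ)) (mP : ℕ × ℕ → ℤ) (c : ℤ) (p : ℕ × ℕ) : ℤ :=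
  if p ∈ SP then mP p else c

variable {Φ1 Γ1 Φ2 Γ2 mP : ℕ × ℕ → ℤ} {SP : Finset (ℕ × ℕ)} {M : ℤ}

lemma sum_arcs_max_le (hM : 0 ≤ M) :
    ∑ e ∈ arcs m n, (max (arcBound Φ1 Φ2 (cellBound SP mP (-M)) e) 0 +
        max (-arcBound Γ1 Γ2 (cellBound SP mP M) e) 0) ≤
      ∑ p ∈ Smn m n, (|Φ1 p| + |Γ1 p| + |Φ2 p| + |Γ2 p| + |mP p|) := by
  have habs (x y : ℤ) : max x 0 + max (-y) 0 ≤ |x| + |y| := by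
    have := le_abs_self x; have := neg_abs_le y; have := abs_nonneg x; have := abs_nonneg y
    omega
  have hcell p : max (cellBound SP mP (-M) p) 0 + max (-cellBound SP mP M p) 0 ≤ |mP p| := by
    unfold cellBound
    split_ifs
    · exact (max_zero_add_max_neg_zero_eq_abs_self _).le
    · simp [hM]
  rw [sum_arcs, ← Finset.sum_add_distrib, ← Finset.sum_add_distrib]
  refine Finset.sum_le_sum fun p _ => ?_
  have := habs (Φ1 p) (Γ1 p); have := habs (Φ2 p) (Γ2 p); have := hcell p
  simp only [arcBound]
  omega

lemma cutValue_nonpos_of_crossing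
    (hM : ∑ p ∈ Smn m n, (|Φ1 p| + |Γ1 p| + |Φ2 p| + |Γ2 p| + |mP p|) < M)
    {K : Node → Bool} {p₀ : ℕ × ℕ} (hp₀ : p₀ ∈ Smn m n) (hp₀SP : p₀ ∉ SP)
    (hcross : K (tail m n (.cell, p₀)) ≠ K (head m n (.cell, p₀))) :
    cutValue (arcs m n) (tail m n) (head m n) (arcBound Φ1 Φ2 (cellBound SP mP (-M)))
      (arcBound Γ1 Γ2 (cellBound SP mP M)) K ≤ 0 := by
  have hM₀ : 0 ≤ M := lt_of_le_of_lt (Finset.sum_nonneg fun _ _ => by positivity) hM |>.le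
  have hmem : ((.cell, p₀) : Arc) ∈ arcs m n := mem_arcs.2 hp₀
  have hterm : cutTerm (K (tail m n (.cell, p₀))) (K (head m n (.cell, p₀))) (-M) M = -M := by
    revert hcross
    cases K (tail m n (.cell, p₀)) <;> cases K (head m n (.cell, p₀)) <;> simp [cutTerm]
  refine (cutValue_le_cutTerm_add hmem K).trans ?_
  rw [show arcBound Φ1 Φ2 (cellBound SP mP (-M)) (.cell, p₀) = -M from if_neg hp₀SP,
    show arcBound Γ1 Γ2 (cellBound SP mP M) (.cell, p₀) = M from if_neg hp₀SP, hterm]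
  exact neg_add_nonpos_iff.2 ((sum_arcs_max_le hM₀).trans hM.le)

lemma fsum_cellBound {Y : Finset (ℕ × ℕ)} (hY : Y ⊆ SP) (c : ℤ) :
    fsum (cellBound SP mP c) Y = fsum mP Y :=
  Finset.sum_congr rfl fun _ hp => if_pos (hY hp)

lemma fsum_neg (g : ℕ × ℕ → ℤ) (Y : Finset (ℕ × ℕ)) : fsum (-g) Y = -fsum g Y :=
  Finset.sum_neg_distrib ..

theorem cutCondition_of_segment_inequalities
    (hM : ∑ p ∈ Smn m n, (|Φ1 p| + |Γ1 p| + |Φ2 p| + |Γ2 p| + |mP p|) < M)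
    (hineq : ∀ X₁ ⊆ Smn m n, ∀ X₂ ⊆ Smn m n, (X₁ \ X₂) ∪ (X₂ \ X₁) ⊆ SP →
        (pstar1 Φ1 Γ1 X₁ + fsum mP (X₂ \ X₁) ≤ bstar2 Φ2 Γ2 X₂ + fsum mP (X₁ \ X₂)) ∧
        (pstar2 Φ2 Γ2 X₂ + fsum mP (X₁ \ X₂) ≤ bstar1 Φ1 Γ1 X₁ + fsum mP (X₂ \ X₁))) :
    CutCondition (arcs m n) (tail m n) (head m n) (arcBound Φ1 Φ2 (cellBound SP mP (-M)))
      (arcBound Γ1 Γ2 (cellBound SP mP M)) := by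
  intro K
  by_cases hP : rowCut m n K \ colCut m n K ∪ colCut m n K \ rowCut m n K ⊆ SP
  · have h₁₂ := Finset.union_subset_iff.1 hP |>.1
    have h₂₁ := Finset.union_subset_iff.1 hP |>.2
    obtain ⟨hineq₁, hineq₂⟩ := hineq _ (rowCut_subset K) _ (colCut_subset K) hP
    cases hK : K .sink
    · rw [cutValue_arcBound hK, fsum_cellBound h₁₂, fsum_cellBound h₂₁]
      linarith
    · rw [cutValue_eq_cutValue_not, neg_arcBound, neg_arcBound, cutValue_arcBound (by simp [hK]),
        rowCut_not, colCut_not, pstar2_neg, bstar1_neg, fsum_neg, fsum_neg, fsum_cellBound h₁₂,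
        fsum_cellBound h₂₁]
      linarith
  · obtain ⟨p₀, hp₀, hp₀SP⟩ := Finset.not_subset.1 hP
    have hp₀Smn : p₀ ∈ Smn m n := by
      rcases Finset.mem_union.1 hp₀ with h | h
      · exact rowCut_subset K (Finset.mem_sdiff.1 h).1
      · exact colCut_subset K (Finset.mem_sdiff.1 h).1
    refine cutValue_nonpos_of_crossing hM hp₀Smn hp₀SP ?_
    simp only [rowCut, colCut, Finset.mem_union, Finset.mem_sdiff, Finset.mem_filter, hp₀Smn,
      true_and] at hp₀
    simp only [tail, head]
    revert hp₀
    cases K (colNode m (p₀.1 - 1) p₀.2) <;> cases K (rowNode n p₀.1 (p₀.2 - 1)) <;>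
      cases K .sink <;> simp

lemma filter_head_eq_row {i q : ℕ} (hi : 1 ≤ i ∧ i ≤ m) (hq : q < n) :
    {e ∈ arcs m n | head m n e = .row i q} =
      if q = 0 then {(.cell, (i, 1))} else {(.row, (i, q)), (.cell, (i, q + 1))} := by
  split_ifs <;> ext ⟨k, a, b⟩ <;> cases k <;>
    simp only [Finset.mem_filter, mem_arcs] <;>
    simp [head, rowNode, colNode, mem_Smn, ite_eq_iff] <;> omega

lemma filter_tail_eq_row {i q : ℕ} (hi : 1 ≤ i ∧ i ≤ m) (hq : q < n) :
    {e ∈ arcs m n | tail m n e = .row i q} = {(.row, (i, q + 1))} := by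
  ext ⟨k, a, b⟩
  cases k <;> simp only [Finset.mem_filter, mem_arcs] <;>
    simp [tail, rowNode, colNode, mem_Smn, ite_eq_iff]
  omega

lemma filter_head_eq_col {p j : ℕ} (hp : p < m) (hj : 1 ≤ j ∧ j ≤ n) :
    {e ∈ arcs m n | head m n e = .col p j} = {(.col, (p + 1, j))} := by
  ext ⟨k, a, b⟩
  cases k <;> simp only [Finset.mem_filter, mem_arcs] <;>
    simp [head, rowNode, colNode, mem_Smn, ite_eq_iff]
  omega

lemma filter_tail_eq_col {p j : ℕ} (hp : p < m) (hj : 1 ≤ j ∧ j ≤ n) :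
    {e ∈ arcs m n | tail m n e = .col p j} =
      if p = 0 then {(.cell, (1, j))} else {(.col, (p, j)), (.cell, (p + 1, j))} := by
  split_ifs <;> ext ⟨k, a, b⟩ <;> cases k <;>
    simp only [Finset.mem_filter, mem_arcs] <;>
    simp [tail, rowNode, colNode, mem_Smn, ite_eq_iff] <;> omega

section Flow

variable {f : Arc → ℤ}

lemma flow_row_step (hf : IsBalanced (arcs m n) (tail m n) (head m n) f) {i q : ℕ}
    (hi : 1 ≤ i ∧ i ≤ m) (hq : q < n) :
    (if q = 0 then 0 else f (.row, (i, q))) + f (.cell, (i, q + 1)) = f (.row, (i, q + 1)) := by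
  have := hf (.row i q)
  rw [filter_head_eq_row hi hq, filter_tail_eq_row hi hq] at this
  split_ifs at this ⊢ <;> simp_all

lemma flow_col_step (hf : IsBalanced (arcs m n) (tail m n) (head m n) f) {p j : ℕ} (hp : p < m)
    (hj : 1 ≤ j ∧ j ≤ n) :
    (if p = 0 then 0 else f (.col, (p, j))) + f (.cell, (p + 1, j)) = f (.col, (p + 1, j)) := by
  have := hf (.col p j)
  rw [filter_head_eq_col hp hj, filter_tail_eq_col hp hj] at this
  split_ifs at this ⊢ <;> simp_all

lemma flow_row_eq_fsum (hf : IsBalanced (arcs m n) (tail m n) (head m n) f) {i j : ℕ}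
    (hi : 1 ≤ i ∧ i ≤ m) (hj : 1 ≤ j ∧ j ≤ n) :
    f (.row, (i, j)) = fsum (fun p => f (.cell, p)) (hPrefix i j) := by
  have := eq_fsum_hPrefix (F := fun q => if q = 0 then 0 else f (.row, (i, q)))
    (g := fun p => f (.cell, p)) (i := i) (n := n) rfl
    (fun q hq => by simpa using flow_row_step hf hi hq) j hj.2
  simpa [show j ≠ 0 by omega] using this

lemma flow_col_eq_fsum (hf : IsBalanced (arcs m n) (tail m n) (head m n) f) {i j : ℕ}
    (hi : 1 ≤ i ∧ i ≤ m) (hj : 1 ≤ j ∧ j ≤ n) :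
    f (.col, (i, j)) = fsum (fun p => f (.cell, p)) (vPrefix i j) := by
  have := eq_fsum_hPrefix (F := fun p => if p = 0 then 0 else f (.col, (p, j))) (n := m)
    (g := fun p => f (.cell, p.swap)) (i := j) rfl
    (fun p hp => by simpa using flow_col_step hf hp hj) i hi.2
  simpa [show i ≠ 0 by omega, vPrefix_eq, fsum, sum_transpose] using this

end Flow

lemma lower_le_upper (hΦΓ1 : ∀ s ∈ Smn m n, Φ1 s ≤ Γ1 s) (hΦΓ2 : ∀ s ∈ Smn m n, Φ2 s ≤ Γ2 s)
    (hM : 0 ≤ M) :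
    ∀ e ∈ arcs m n, arcBound Φ1 Φ2 (cellBound SP mP (-M)) e ≤ arcBound Γ1 Γ2 (cellBound SP mP M) e
  | (.row, p), he => hΦΓ1 p (mem_arcs.1 he)
  | (.col, p), he => hΦΓ2 p (mem_arcs.1 he)
  | (.cell, p), _ => by simp only [arcBound, cellBound]; split_ifs <;> omega

lemma cellFlow_eq_of_mem (hSP : SP ⊆ Smn m n) {f : Arc → ℤ}
    (hf : IsCirculation (arcs m n) (tail m n) (head m n) (arcBound Φ1 Φ2 (cellBound SP mP (-M)))
      (arcBound Γ1 Γ2 (cellBound SP mP M)) f) {s : ℕ × ℕ} (hs : s ∈ SP) : f (.cell, s) = mP s := by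
  have := hf.1 (.cell, s) (mem_arcs.2 (hSP hs))
  simp only [arcBound, cellBound, if_pos hs] at this
  exact le_antisymm this.2 this.1

lemma isPBM_of_isCirculation {c₁ c₂ : ℕ × ℕ → ℤ} {f : Arc → ℤ}
    (hf : IsCirculation (arcs m n) (tail m n) (head m n) (arcBound Φ1 Φ2 c₁) (arcBound Γ1 Γ2 c₂)
      f) :
    IsPBM m n Φ1 Γ1 Φ2 Γ2 (fun p => f (.cell, p)) := by
  intro i hi j hj
  rw [Finset.mem_Icc] at hi hj
  have hmem (k : ArcKind) : (k, (i, j)) ∈ arcs m n :=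
    mem_arcs.2 (mem_Smn.2 ⟨hi.1, hi.2, hj.1, hj.2⟩)
  rw [← flow_row_eq_fsum hf.2 hi hj, ← flow_col_eq_fsum hf.2 hi hj]
  exact ⟨hf.1 _ (hmem .row), hf.1 _ (hmem .col)⟩

end Network

end PrefixBounded

open PrefixBounded Circulation

theorem stmt_13_general (m n : ℕ)
    (Φ1 Γ1 Φ2 Γ2 : ℕ × ℕ → ℤ)
    (hΦΓ1 : ∀ s ∈ Smn m n, Φ1 s ≤ Γ1 s) (hΦΓ2 : ∀ s ∈ Smn m n, Φ2 s ≤ Γ2 s)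
    (SP : Finset (ℕ × ℕ)) (hSP : SP ⊆ Smn m n) (mP : ℕ × ℕ → ℤ) :
    (∃ A : ℕ × ℕ → ℤ, IsPBM m n Φ1 Γ1 Φ2 Γ2 A ∧ ∀ s ∈ SP, A s = mP s) ↔
      (∀ X₁ ⊆ Smn m n, ∀ X₂ ⊆ Smn m n, (X₁ \ X₂) ∪ (X₂ \ X₁) ⊆ SP →
        (pstar1 Φ1 Γ1 X₁ + fsum mP (X₂ \ X₁) ≤
          bstar2 Φ2 Γ2 X₂ + fsum mP (X₁ \ X₂)) ∧
        (pstar2 Φ2 Γ2 X₂ + fsum mP (X₁ \ X₂) ≤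
          bstar1 Φ1 Γ1 X₁ + fsum mP (X₂ \ X₁))) := by
  refine ⟨fun ⟨A, hA, hAP⟩ X₁ hX₁ X₂ hX₂ hP => segment_inequalities_of_isPBM hA hAP hX₁ hX₂ hP,
    fun hineq => ?_⟩
  have hM := lt_one_add (∑ p ∈ Smn m n, (|Φ1 p| + |Γ1 p| + |Φ2 p| + |Γ2 p| + |mP p|))
  obtain ⟨f, hf⟩ := exists_isCirculation
    (lower_le_upper hΦΓ1 hΦΓ2 (by positivity))
    (cutCondition_of_segment_inequalities hM hineq)
  exact ⟨_, isPBM_of_isCirculation hf, fun s hs => cellFlow_eq_of_mem hSP hf hs⟩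

/-- existence of a prefix-bounded matrix extending a partial
prescription m_P on S_P (Corollary fixedPB). -/
theorem stmt_13 (m n : ℕ) (hm : 1 ≤ m) (hn : 1 ≤ n)
    (Φ1 Γ1 Φ2 Γ2 : ℕ × ℕ → ℤ)
    (hΦΓ1 : ∀ s ∈ Smn m n, Φ1 s ≤ Γ1 s) (hΦΓ2 : ∀ s ∈ Smn m n, Φ2 s ≤ Γ2 s)
    (SP : Finset (ℕ × ℕ)) (hSP : SP ⊆ Smn m n) (mP : ℕ × ℕ → ℤ) :
    (∃ A : ℕ × ℕ → ℤ, IsPBM m n Φ1 Γ1 Φ2 Γ2 A ∧ ∀ s ∈ SP, A s = mP s) ↔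
      (∀ X₁ ⊆ Smn m n, ∀ X₂ ⊆ Smn m n, (X₁ \ X₂) ∪ (X₂ \ X₁) ⊆ SP →
        (pstar1 Φ1 Γ1 X₁ + fsum mP (X₂ \ X₁) ≤
          bstar2 Φ2 Γ2 X₂ + fsum mP (X₁ \ X₂)) ∧
        (pstar2 Φ2 Γ2 X₂ + fsum mP (X₁ \ X₂) ≤
          bstar1 Φ1 Γ1 X₁ + fsum mP (X₂ \ X₁))) :=
  stmt_13_general m n Φ1 Γ1 Φ2 Γ2 hΦΓ1 hΦΓ2 SP hSP mP
end

section
/- Let k and n be positive integers and let A be a k-regular alternating sign matrix of order n. Then there exist alternating sign matrices A₁, …, A_k of order n with pairwise disjoint patterns (for l ≠ l' there is no position (i,j) with A_l(i,j) ≠ 0 and A_{l'}(i,j) ≠ 0) such that A = A₁ + ⋯ + A_k. -/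
/-- A is an alternating sign matrix (ASM) of order n: every horizontal and
vertical prefix sum lies in {0, 1}, and every full row sum and full column
sum equals 1. -/
def IsASM (n : ℕ) (A : ℕ × ℕ → ℤ) : Prop :=
  (∀ i ∈ Finset.Icc 1 n, ∀ j ∈ Finset.Icc 1 n,
    (fsum A (hPrefix i j) = 0 ∨ fsum A (hPrefix i j) = 1) ∧
    (fsum A (vPrefix i j) = 0 ∨ fsum A (vPrefix i j) = 1)) ∧
  (∀ i ∈ Finset.Icc 1 n, fsum A (hPrefix i n) = 1) ∧
  (∀ j ∈ Finset.Icc 1 n, fsum A (vPrefix n j) = 1)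


namespace BD


/-- `q` is not an integer. -/
def Frac (q : ℚ) : Prop := q ≠ (⌊q⌋ : ℚ)

instance : DecidablePred Frac := fun q => by unfold Frac; infer_instance

lemma notFrac_iff {q : ℚ} : ¬ Frac q ↔ ∃ m : ℤ, q = (m : ℚ) := by
  constructor
  · intro h; exact ⟨⌊q⌋, not_not.mp h⟩
  · rintro ⟨m, rfl⟩; simp [Frac]

lemma notFrac_int (m : ℤ) : ¬ Frac (m : ℚ) := notFrac_iff.mpr ⟨m, rfl⟩

lemma notFrac_zero : ¬ Frac (0 : ℚ) := by simpa using notFrac_int 0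

lemma notFrac_add {a b : ℚ} (ha : ¬ Frac a) (hb : ¬ Frac b) : ¬ Frac (a + b) := by
  rcases notFrac_iff.mp ha with ⟨m, rfl⟩
  rcases notFrac_iff.mp hb with ⟨m', rfl⟩
  exact notFrac_iff.mpr ⟨m + m', by push_cast; ring⟩

lemma frac_of_eq_add {a b c : ℚ} (h : c = a + b) (hc : Frac c) (ha : ¬ Frac a) : Frac b := by
  by_contra hb
  rw [h] at hc; exact notFrac_add ha hb hc

/-- prefix-sum along row `i` up to column `j`, rational matrices -/
def Py1 (x : ℕ × ℕ → ℚ) (i j : ℕ) : ℚ := ∑ j' ∈ Finset.Icc 1 j, x (i, j')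
/-- prefix-sum along column `j` up to row `i` -/
def Py2 (x : ℕ × ℕ → ℚ) (i j : ℕ) : ℚ := ∑ i' ∈ Finset.Icc 1 i, x (i', j)

@[simp] lemma Py1_zero (x : ℕ × ℕ → ℚ) (i : ℕ) : Py1 x i 0 = 0 := by simp [Py1]
@[simp] lemma Py2_zero (x : ℕ × ℕ → ℚ) (j : ℕ) : Py2 x 0 j = 0 := by simp [Py2]

lemma Py1_succ (x : ℕ × ℕ → ℚ) (i j : ℕ) : Py1 x i (j+1) = Py1 x i j + x (i, j+1) :=
  Finset.sum_Icc_succ_top (Nat.le_add_left 1 j) _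

lemma Py2_succ (x : ℕ × ℕ → ℚ) (i j : ℕ) : Py2 x (i+1) j = Py2 x i j + x (i+1, j) :=
  Finset.sum_Icc_succ_top (Nat.le_add_left 1 i) _

lemma Py1_pred (x : ℕ × ℕ → ℚ) (i j : ℕ) (hj : 1 ≤ j) : Py1 x i j = Py1 x i (j-1) + x (i, j) := by
  obtain ⟨j', rfl⟩ := Nat.exists_eq_add_of_le' hj
  simpa using Py1_succ x i j'

lemma Py2_pred (x : ℕ × ℕ → ℚ) (i j : ℕ) (hi : 1 ≤ i) : Py2 x i j = Py2 x (i-1) j + x (i, j) := by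
  obtain ⟨i', rfl⟩ := Nat.exists_eq_add_of_le' hi
  simpa using Py2_succ x i' j

lemma Py1_add (x y : ℕ × ℕ → ℚ) (i j : ℕ) : Py1 (fun s => x s + y s) i j = Py1 x i j + Py1 y i j := by
  simp [Py1, Finset.sum_add_distrib]

lemma Py2_add (x y : ℕ × ℕ → ℚ) (i j : ℕ) : Py2 (fun s => x s + y s) i j = Py2 x i j + Py2 y i j := by
  simp [Py2, Finset.sum_add_distrib]

lemma Py1_smul (c : ℚ) (x : ℕ × ℕ → ℚ) (i j : ℕ) : Py1 (fun s => c * x s) i j = c * Py1 x i j := by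
  simp [Py1, Finset.mul_sum]

lemma Py2_smul (c : ℚ) (x : ℕ × ℕ → ℚ) (i j : ℕ) : Py2 (fun s => c * x s) i j = c * Py2 x i j := by
  simp [Py2, Finset.mul_sum]

lemma fsum_hPrefix (B : ℕ × ℕ → ℤ) (i j : ℕ) : fsum B (hPrefix i j) = ∑ j' ∈ Finset.Icc 1 j, B (i, j') := by
  rw [fsum, hPrefix, Finset.sum_product]; simp

lemma fsum_vPrefix (B : ℕ × ℕ → ℤ) (i j : ℕ) : fsum B (vPrefix i j) = ∑ i' ∈ Finset.Icc 1 i, B (i', j) := by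
  rw [fsum, vPrefix, Finset.sum_product]; simp

lemma Py1_cast (B : ℕ × ℕ → ℤ) (i j : ℕ) : Py1 (fun s => (B s : ℚ)) i j = ((fsum B (hPrefix i j) : ℤ) : ℚ) := by
  rw [fsum_hPrefix]; push_cast [Py1]; rfl

lemma Py2_cast (B : ℕ × ℕ → ℤ) (i j : ℕ) : Py2 (fun s => (B s : ℚ)) i j = ((fsum B (vPrefix i j) : ℤ) : ℚ) := by
  rw [fsum_vPrefix]; push_cast [Py2]; rfl

lemma fsum_sub (B C : ℕ × ℕ → ℤ) (X : Finset (ℕ × ℕ)) :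
    fsum (fun s => B s - C s) X = fsum B X - fsum C X := by
  simp [fsum, Finset.sum_sub_distrib]

lemma mem_Smn {n : ℕ} {s : ℕ × ℕ} : s ∈ Smn n n ↔ (1 ≤ s.1 ∧ s.1 ≤ n) ∧ (1 ≤ s.2 ∧ s.2 ≤ n) := by
  simp [Smn, Finset.mem_product]




lemma exists_closed_walk {V : Type} [DecidableEq V] (S : Finset V) (Adj : V → V → Prop)
    (hS : ∀ u v, Adj u v → u ∈ S) (hirr : ∀ u v, Adj u v → u ≠ v)
    (hdeg : ∀ u v, Adj u v → ∃ w, Adj v w ∧ w ≠ u)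
    {a0 b0 : V} (h0 : Adj a0 b0) :
    ∃ (vv : ℕ → V) (a b : ℕ), a + 2 < b ∧ vv b = vv a ∧
      (∀ t, Adj (vv t) (vv (t + 1))) ∧
      (∀ s t, s < b → t < b → vv s = vv t → s = t) := by
  classical
  set step : V × V → V × V := fun p =>
    if h : Adj p.1 p.2 then (p.2, Classical.choose (hdeg p.1 p.2 h)) else p with hstep
  set W : ℕ → V × V := fun t => step^[t] (a0, b0) with hW
  have hWsucc : ∀ t, W (t + 1) = step (W t) := by
    intro t; simp only [hW, Function.iterate_succ_apply']
  have hAdj : ∀ t, Adj (W t).1 (W t).2 := by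
    intro t; induction t with
    | zero => exact h0
    | succ t ih =>
      rw [hWsucc t, hstep]
      simp only [dif_pos ih]
      exact (Classical.choose_spec (hdeg (W t).1 (W t).2 ih)).1
  have hfst : ∀ t, (W (t + 1)).1 = (W t).2 := by
    intro t; rw [hWsucc t, hstep]; simp only [dif_pos (hAdj t)]
  have hsnd : ∀ t, (W (t + 1)).2 ≠ (W t).1 := by
    intro t; rw [hWsucc t, hstep]; simp only [dif_pos (hAdj t)]
    exact (Classical.choose_spec (hdeg (W t).1 (W t).2 (hAdj t))).2
  set vv : ℕ → V := fun t => (W t).1 with hvv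
  have hA : ∀ t, Adj (vv t) (vv (t + 1)) := by
    intro t; have := hAdj t; rw [hvv]; simp only [hfst t]; exact this
  have hB : ∀ t, vv (t + 2) ≠ vv t := by
    intro t
    have : vv (t + 2) = (W (t + 1)).2 := by rw [hvv]; exact hfst (t + 1)
    rw [this]; exact hsnd t
  -- pigeonhole
  have hmem : ∀ t, vv t ∈ S := fun t => hS _ _ (hA t)
  obtain ⟨a', -, b', -, hne, heq'⟩ :=
    Finset.exists_ne_map_eq_of_card_lt_of_maps_to
      (s := Finset.range (S.card + 1)) (by simp) (fun t _ => hmem t)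
  have hex : ∃ m, ∃ a, a < m ∧ vv a = vv m := by
    rcases Nat.lt_or_ge a' b' with h | h
    · exact ⟨b', a', h, heq'⟩
    · exact ⟨a', b', lt_of_le_of_ne h (Ne.symm hne), heq'.symm⟩
  set b := Nat.find hex with hb
  obtain ⟨a, hab, heq⟩ := Nat.find_spec hex
  rw [← hb] at hab heq
  have hinj : ∀ s t, s < b → t < b → vv s = vv t → s = t := by
    intro s t hs ht hst
    by_contra hne2
    rcases Nat.lt_or_ge s t with h | h
    · exact Nat.find_min hex ht ⟨s, h, hst⟩
    · exact Nat.find_min hex hs ⟨t, lt_of_le_of_ne h (Ne.symm hne2), hst.symm⟩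
  have heq2 : vv b = vv a := by rw [hb]; exact heq.symm
  refine ⟨vv, a, b, ?_, heq2, hA, hinj⟩
  have h1 : b ≠ a + 1 := by
    intro hcon
    rw [hcon] at heq2
    exact hirr _ _ (hA a) heq2.symm
  have h2 : b ≠ a + 2 := by
    intro hcon
    rw [hcon] at heq2
    exact hB a heq2
  omega


variable {n : ℕ} {x : ℕ × ℕ → ℚ}
/-- adjacency of the fractional graph of `x` -/

def Adj (n : ℕ) (x : ℕ × ℕ → ℚ) (u v : Bool × ℕ × ℕ) : Prop :=
  (∃ i j, 1 ≤ i ∧ i ≤ n ∧ 1 ≤ j ∧ j ≤ n ∧ Frac (x (i, j)) ∧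
     ((u = (true, i, j) ∧ v = (false, i, j)) ∨ (u = (false, i, j) ∧ v = (true, i, j)))) ∨
  (∃ i j, 1 ≤ i ∧ i ≤ n ∧ 1 ≤ j ∧ j + 1 ≤ n ∧ Frac (Py1 x i j) ∧
     ((u = (true, i, j) ∧ v = (true, i, j + 1)) ∨ (u = (true, i, j + 1) ∧ v = (true, i, j)))) ∨
  (∃ i j, 1 ≤ i ∧ i + 1 ≤ n ∧ 1 ≤ j ∧ j ≤ n ∧ Frac (Py2 x i j) ∧
     ((u = (false, i, j) ∧ v = (false, i + 1, j)) ∨ (u = (false, i + 1, j) ∧ v = (false, i, j))))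

variable {n : ℕ} {x : ℕ × ℕ → ℚ}

lemma Adj.symm {u v} (h : Adj n x u v) : Adj n x v u := by
  rcases h with ⟨i, j, h1, h2, h3, h4, h5, h6 | h6⟩ | ⟨i, j, h1, h2, h3, h4, h5, h6 | h6⟩ |
    ⟨i, j, h1, h2, h3, h4, h5, h6 | h6⟩
  · exact Or.inl ⟨i, j, h1, h2, h3, h4, h5, Or.inr ⟨h6.2, h6.1⟩⟩
  · exact Or.inl ⟨i, j, h1, h2, h3, h4, h5, Or.inl ⟨h6.2, h6.1⟩⟩
  · exact Or.inr (Or.inl ⟨i, j, h1, h2, h3, h4, h5, Or.inr ⟨h6.2, h6.1⟩⟩)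
  · exact Or.inr (Or.inl ⟨i, j, h1, h2, h3, h4, h5, Or.inl ⟨h6.2, h6.1⟩⟩)
  · exact Or.inr (Or.inr ⟨i, j, h1, h2, h3, h4, h5, Or.inr ⟨h6.2, h6.1⟩⟩)
  · exact Or.inr (Or.inr ⟨i, j, h1, h2, h3, h4, h5, Or.inl ⟨h6.2, h6.1⟩⟩)

lemma Adj.ne {u v} (h : Adj n x u v) : u ≠ v := by
  rcases h with ⟨i, j, h1, h2, h3, h4, h5, ⟨rfl, rfl⟩ | ⟨rfl, rfl⟩⟩ |
    ⟨i, j, h1, h2, h3, h4, h5, ⟨rfl, rfl⟩ | ⟨rfl, rfl⟩⟩ |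
    ⟨i, j, h1, h2, h3, h4, h5, ⟨rfl, rfl⟩ | ⟨rfl, rfl⟩⟩ <;> simp

lemma Adj.mem_left {u v} (h : Adj n x u v) :
    u ∈ (Finset.univ : Finset Bool) ×ˢ (Finset.Icc 1 n ×ˢ Finset.Icc 1 n) := by
  rcases h with ⟨i, j, h1, h2, h3, h4, h5, ⟨rfl, rfl⟩ | ⟨rfl, rfl⟩⟩ |
    ⟨i, j, h1, h2, h3, h4, h5, ⟨rfl, rfl⟩ | ⟨rfl, rfl⟩⟩ |
    ⟨i, j, h1, h2, h3, h4, h5, ⟨rfl, rfl⟩ | ⟨rfl, rfl⟩⟩ <;>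
    simp [Finset.mem_product] <;> omega

/-- classification of neighbours of a row node -/
lemma adj_row {i j : ℕ} {w} (h : Adj n x (true, i, j) w) :
    w = (false, i, j) ∨ w = (true, i, j + 1) ∨ (2 ≤ j ∧ w = (true, i, j - 1)) := by
  rcases h with ⟨i', j', h1, h2, h3, h4, h5, ⟨he, rfl⟩ | ⟨he, rfl⟩⟩ |
    ⟨i', j', h1, h2, h3, h4, h5, ⟨he, rfl⟩ | ⟨he, rfl⟩⟩ |
    ⟨i', j', h1, h2, h3, h4, h5, ⟨he, rfl⟩ | ⟨he, rfl⟩⟩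
  · simp at he
    obtain ⟨rfl, rfl⟩ := he
    exact Or.inl rfl
  · simp at he
  · simp at he
    obtain ⟨rfl, rfl⟩ := he
    exact Or.inr (Or.inl rfl)
  · simp at he
    obtain ⟨rfl, hj⟩ := he
    refine Or.inr (Or.inr ⟨by omega, ?_⟩)
    have : j - 1 = j' := by omega
    rw [this]
  · simp at he
  · simp at he

/-- classification of neighbours of a column node -/
lemma adj_col {i j : ℕ} {w} (h : Adj n x (false, i, j) w) :
    w = (true, i, j) ∨ w = (false, i + 1, j) ∨ (2 ≤ i ∧ w = (false, i - 1, j)) := by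
  rcases h with ⟨i', j', h1, h2, h3, h4, h5, ⟨he, rfl⟩ | ⟨he, rfl⟩⟩ |
    ⟨i', j', h1, h2, h3, h4, h5, ⟨he, rfl⟩ | ⟨he, rfl⟩⟩ |
    ⟨i', j', h1, h2, h3, h4, h5, ⟨he, rfl⟩ | ⟨he, rfl⟩⟩
  · simp at he
  · simp at he
    obtain ⟨rfl, rfl⟩ := he
    exact Or.inl rfl
  · simp at he
  · simp at he
  · simp at he
    obtain ⟨rfl, rfl⟩ := he
    exact Or.inr (Or.inl rfl)
  · simp at he
    obtain ⟨hi, rfl⟩ := he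
    refine Or.inr (Or.inr ⟨by omega, ?_⟩)
    have : i - 1 = i' := by omega
    rw [this]

/-- inversion: x-type edge -/
lemma adj_rc {i j i' j' : ℕ} (h : Adj n x (true, i, j) (false, i', j')) :
    i' = i ∧ j' = j ∧ (1 ≤ i ∧ i ≤ n ∧ 1 ≤ j ∧ j ≤ n) ∧ Frac (x (i, j)) := by
  rcases h with ⟨a, b, h1, h2, h3, h4, h5, ⟨he, hf⟩ | ⟨he, hf⟩⟩ |
    ⟨a, b, h1, h2, h3, h4, h5, ⟨he, hf⟩ | ⟨he, hf⟩⟩ |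
    ⟨a, b, h1, h2, h3, h4, h5, ⟨he, hf⟩ | ⟨he, hf⟩⟩
  · simp at he hf
    obtain ⟨rfl, rfl⟩ := he
    exact ⟨hf.1, hf.2, ⟨h1, h2, h3, h4⟩, h5⟩
  · simp at he
  · simp at hf
  · simp at hf
  · simp at he
  · simp at he

/-- inversion: row-type edge -/
lemma adj_rr {i j : ℕ} (h : Adj n x (true, i, j) (true, i, j + 1)) :
    (1 ≤ i ∧ i ≤ n ∧ 1 ≤ j ∧ j + 1 ≤ n) ∧ Frac (Py1 x i j) := by
  rcases h with ⟨a, b, h1, h2, h3, h4, h5, ⟨he, hf⟩ | ⟨he, hf⟩⟩ |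
    ⟨a, b, h1, h2, h3, h4, h5, ⟨he, hf⟩ | ⟨he, hf⟩⟩ |
    ⟨a, b, h1, h2, h3, h4, h5, ⟨he, hf⟩ | ⟨he, hf⟩⟩
  · simp at hf
  · simp at he
  · simp at he hf
    obtain ⟨rfl, rfl⟩ := he
    exact ⟨⟨h1, h2, h3, h4⟩, h5⟩
  · simp at he hf
    omega
  · simp at he
  · simp at he

/-- inversion: column-type edge -/
lemma adj_cc {i j : ℕ} (h : Adj n x (false, i, j) (false, i + 1, j)) :
    (1 ≤ i ∧ i + 1 ≤ n ∧ 1 ≤ j ∧ j ≤ n) ∧ Frac (Py2 x i j) := by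
  rcases h with ⟨a, b, h1, h2, h3, h4, h5, ⟨he, hf⟩ | ⟨he, hf⟩⟩ |
    ⟨a, b, h1, h2, h3, h4, h5, ⟨he, hf⟩ | ⟨he, hf⟩⟩ |
    ⟨a, b, h1, h2, h3, h4, h5, ⟨he, hf⟩ | ⟨he, hf⟩⟩
  · simp at he
  · simp at hf
  · simp at he
  · simp at he
  · simp at he hf
    obtain ⟨rfl, rfl⟩ := he
    exact ⟨⟨h1, h2, h3, h4⟩, h5⟩
  · simp at he hf
    omega




/-- among the three quantities at a node, fractionality cannot be isolated -/
lemma frac_two_of_three {a b c : ℚ} (h : c = a + b) :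
    (Frac a → Frac b ∨ Frac c) ∧ (Frac b → Frac a ∨ Frac c) ∧ (Frac c → Frac a ∨ Frac b) := by
  classical
  refine ⟨?_, ?_, ?_⟩ <;> intro h1 <;> by_contra hcon <;> push_neg at hcon
  · obtain ⟨m, hm⟩ := notFrac_iff.mp hcon.1
    obtain ⟨m', hm'⟩ := notFrac_iff.mp hcon.2
    exact (notFrac_iff.mpr ⟨m' - m, by push_cast; linarith [h, hm, hm']⟩) h1
  · obtain ⟨m, hm⟩ := notFrac_iff.mp hcon.1
    obtain ⟨m', hm'⟩ := notFrac_iff.mp hcon.2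
    exact (notFrac_iff.mpr ⟨m' - m, by push_cast; linarith [h, hm, hm']⟩) h1
  · obtain ⟨m, hm⟩ := notFrac_iff.mp hcon.1
    obtain ⟨m', hm'⟩ := notFrac_iff.mp hcon.2
    exact (notFrac_iff.mpr ⟨m + m', by push_cast; linarith [h, hm, hm']⟩) h1

/-- every entered node can be exited through a different fractional edge -/
lemma exists_next (hxn : ∀ i, 1 ≤ i → i ≤ n → ¬ Frac (Py1 x i n))
    (hyn : ∀ j, 1 ≤ j → j ≤ n → ¬ Frac (Py2 x n j))
    {u v : Bool × ℕ × ℕ} (h : Adj n x u v) : ∃ w, Adj n x v w ∧ w ≠ u := by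
  classical
  obtain ⟨b, i, j⟩ := v
  cases b
  · -- column node (false, i, j)
    have hcls := adj_col h.symm
    -- ranges for (i,j)
    have hrange : 1 ≤ i ∧ i ≤ n ∧ 1 ≤ j ∧ j ≤ n := by
      rcases hcls with rfl | rfl | ⟨h2, rfl⟩
      · have := adj_rc h
        exact this.2.2.1
      · have := (adj_cc h.symm).1
        omega
      · have hi : i - 1 + 1 = i := by omega
        have hadj : Adj n x (false, i - 1, j) (false, (i - 1) + 1, j) := by rw [hi]; exact h
        have := (adj_cc hadj).1
        omega
    obtain ⟨hi1, hin, hj1, hjn⟩ := hrange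
    have hcons : Py2 x i j = Py2 x (i-1) j + x (i, j) := Py2_pred x i j hi1
    have key := frac_two_of_three hcons
    -- which edge did we come from?
    rcases hcls with rfl | rfl | ⟨h2, rfl⟩
    · -- entered from the row node: Frac (x (i,j))
      have hfx : Frac (x (i, j)) := (adj_rc h).2.2.2
      rcases key.2.1 hfx with hup | hdn
      · -- go up: Frac (Py2 x (i-1) j), need i ≥ 2
        have hi2 : 2 ≤ i := by
          by_contra hcon
          have : i = 1 := by omega
          rw [this] at hup; simp at hup
          exact hup rfl
        refine ⟨(false, i - 1, j), ?_, by simp⟩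
        refine Or.inr (Or.inr ⟨i - 1, j, by omega, by omega, hj1, hjn, ?_, Or.inr ⟨?_, ?_⟩⟩)
        · exact hup
        · have : i - 1 + 1 = i := by omega
          rw [this]
        · rfl
      · -- go down: Frac (Py2 x i j), need i < n
        have hi2 : i + 1 ≤ n := by
          rcases Nat.lt_or_ge i n with h' | h'
          · omega
          · have : i = n := by omega
            rw [this] at hdn
            exact absurd hdn (hyn j hj1 hjn)
        exact ⟨(false, i + 1, j), Or.inr (Or.inr ⟨i, j, hi1, hi2, hj1, hjn, hdn, Or.inl ⟨rfl, rfl⟩⟩),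
          by simp⟩
    · -- entered from below: Frac (Py2 x i j)
      have hdn : Frac (Py2 x i j) := (adj_cc h.symm).2
      rcases key.2.2 hdn with hup | hfx
      · have hi2 : 2 ≤ i := by
          by_contra hcon
          have : i = 1 := by omega
          rw [this] at hup; simp at hup
          exact hup rfl
        refine ⟨(false, i - 1, j), ?_, by intro hcon; simp at hcon; try omega⟩
        refine Or.inr (Or.inr ⟨i - 1, j, by omega, by omega, hj1, hjn, hup, Or.inr ⟨?_, rfl⟩⟩)
        have : i - 1 + 1 = i := by omega
        rw [this]
      · exact ⟨(true, i, j), Or.inl ⟨i, j, hi1, hin, hj1, hjn, hfx, Or.inr ⟨rfl, rfl⟩⟩, by simp⟩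
    · -- entered from above: Frac (Py2 x (i-1) j)
      have hup : Frac (Py2 x (i-1) j) := by
        have hi : i - 1 + 1 = i := by omega
        have hadj : Adj n x (false, i - 1, j) (false, (i - 1) + 1, j) := by rw [hi]; exact h
        exact (adj_cc hadj).2
      rcases key.1 hup with hfx | hdn
      · exact ⟨(true, i, j), Or.inl ⟨i, j, hi1, hin, hj1, hjn, hfx, Or.inr ⟨rfl, rfl⟩⟩, by simp⟩
      · have hi2 : i + 1 ≤ n := by
          rcases Nat.lt_or_ge i n with h' | h'
          · omega
          · have : i = n := by omega
            rw [this] at hdn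
            exact absurd hdn (hyn j hj1 hjn)
        refine ⟨(false, i + 1, j), Or.inr (Or.inr ⟨i, j, hi1, hi2, hj1, hjn, hdn, Or.inl ⟨rfl, rfl⟩⟩),
          by intro hcon; simp at hcon; try omega⟩
  · -- row node (true, i, j)
    have hcls := adj_row h.symm
    have hrange : 1 ≤ i ∧ i ≤ n ∧ 1 ≤ j ∧ j ≤ n := by
      rcases hcls with rfl | rfl | ⟨h2, rfl⟩
      · have := adj_rc h.symm
        exact this.2.2.1
      · have := (adj_rr h.symm).1
        omega
      · have hj : j - 1 + 1 = j := by omega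
        have hadj : Adj n x (true, i, j - 1) (true, i, (j - 1) + 1) := by rw [hj]; exact h
        have := (adj_rr hadj).1
        omega
    obtain ⟨hi1, hin, hj1, hjn⟩ := hrange
    have hcons : Py1 x i j = Py1 x i (j-1) + x (i, j) := Py1_pred x i j hj1
    have key := frac_two_of_three hcons
    rcases hcls with rfl | rfl | ⟨h2, rfl⟩
    · have hfx : Frac (x (i, j)) := (adj_rc h.symm).2.2.2
      rcases key.2.1 hfx with hlt | hrt
      · have hj2 : 2 ≤ j := by
          by_contra hcon
          have : j = 1 := by omega
          rw [this] at hlt; simp at hlt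
          exact hlt rfl
        refine ⟨(true, i, j - 1), ?_, by simp⟩
        refine Or.inr (Or.inl ⟨i, j - 1, hi1, hin, by omega, by omega, hlt, Or.inr ⟨?_, rfl⟩⟩)
        have : j - 1 + 1 = j := by omega
        rw [this]
      · have hj2 : j + 1 ≤ n := by
          rcases Nat.lt_or_ge j n with h' | h'
          · omega
          · have : j = n := by omega
            rw [this] at hrt
            exact absurd hrt (hxn i hi1 hin)
        exact ⟨(true, i, j + 1), Or.inr (Or.inl ⟨i, j, hi1, hin, hj1, hj2, hrt, Or.inl ⟨rfl, rfl⟩⟩),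
          by simp⟩
    · have hrt : Frac (Py1 x i j) := (adj_rr h.symm).2
      rcases key.2.2 hrt with hlt | hfx
      · have hj2 : 2 ≤ j := by
          by_contra hcon
          have : j = 1 := by omega
          rw [this] at hlt; simp at hlt
          exact hlt rfl
        refine ⟨(true, i, j - 1), ?_, by intro hcon; simp at hcon; try omega⟩
        refine Or.inr (Or.inl ⟨i, j - 1, hi1, hin, by omega, by omega, hlt, Or.inr ⟨?_, rfl⟩⟩)
        have : j - 1 + 1 = j := by omega
        rw [this]
      · exact ⟨(false, i, j), Or.inl ⟨i, j, hi1, hin, hj1, hjn, hfx, Or.inl ⟨rfl, rfl⟩⟩, by simp⟩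
    · have hlt : Frac (Py1 x i (j-1)) := by
        have hj : j - 1 + 1 = j := by omega
        have hadj : Adj n x (true, i, j - 1) (true, i, (j - 1) + 1) := by rw [hj]; exact h
        exact (adj_rr hadj).2
      rcases key.1 hlt with hfx | hrt
      · exact ⟨(false, i, j), Or.inl ⟨i, j, hi1, hin, hj1, hjn, hfx, Or.inl ⟨rfl, rfl⟩⟩, by simp⟩
      · have hj2 : j + 1 ≤ n := by
          rcases Nat.lt_or_ge j n with h' | h'
          · omega
          · have : j = n := by omega
            rw [this] at hrt
            exact absurd hrt (hxn i hi1 hin)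
        refine ⟨(true, i, j + 1), Or.inr (Or.inl ⟨i, j, hi1, hin, hj1, hj2, hrt, Or.inl ⟨rfl, rfl⟩⟩),
          by intro hcon; simp at hcon; try omega⟩






lemma cycle_exists (hxn : ∀ i, 1 ≤ i → i ≤ n → ¬ Frac (Py1 x i n))
    (hyn : ∀ j, 1 ≤ j → j ≤ n → ¬ Frac (Py2 x n j))
    {s0 : ℕ × ℕ} (hs1 : 1 ≤ s0.1) (hs2 : s0.1 ≤ n) (hs3 : 1 ≤ s0.2) (hs4 : s0.2 ≤ n)
    (hf : Frac (x s0)) :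
    ∃ z : ℕ × ℕ → ℤ,
      (∀ s, z s ≠ 0 → (1 ≤ s.1 ∧ s.1 ≤ n ∧ 1 ≤ s.2 ∧ s.2 ≤ n) ∧ Frac (x s)) ∧
      (∀ s, z s = 1 ∨ z s = 0 ∨ z s = -1) ∧
      (∀ i j, (∑ j' ∈ Finset.Icc 1 j, z (i, j') = 1 ∨ ∑ j' ∈ Finset.Icc 1 j, z (i, j') = 0 ∨
          ∑ j' ∈ Finset.Icc 1 j, z (i, j') = -1) ∧
        (∑ j' ∈ Finset.Icc 1 j, z (i, j') ≠ 0 → Frac (Py1 x i j))) ∧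
      (∀ i j, (∑ i' ∈ Finset.Icc 1 i, z (i', j) = 1 ∨ ∑ i' ∈ Finset.Icc 1 i, z (i', j) = 0 ∨
          ∑ i' ∈ Finset.Icc 1 i, z (i', j) = -1) ∧
        (∑ i' ∈ Finset.Icc 1 i, z (i', j) ≠ 0 → Frac (Py2 x i j))) ∧
      (∃ s, z s ≠ 0) := by
  classical
  have h0 : Adj n x (true, s0.1, s0.2) (false, s0.1, s0.2) :=
    Or.inl ⟨s0.1, s0.2, hs1, hs2, hs3, hs4, hf, Or.inl ⟨rfl, rfl⟩⟩
  obtain ⟨vv, a, b, hab, hba, hA, hinj⟩ :=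
    exists_closed_walk ((Finset.univ : Finset Bool) ×ˢ (Finset.Icc 1 n ×ˢ Finset.Icc 1 n))
      (Adj n x) (fun u v h => h.mem_left) (fun u v h => h.ne)
      (fun u v h => exists_next hxn hyn h) h0
  -- step counts
  set d : (Bool × ℕ × ℕ) → (Bool × ℕ × ℕ) → ℕ := fun u w =>
    ((Finset.Ico a b).filter (fun t => vv t = u ∧ vv (t + 1) = w)).card with hd
  have hd_adj : ∀ u w, d u w ≠ 0 → Adj n x u w := by
    intro u w h
    obtain ⟨t, ht⟩ := Finset.card_ne_zero.mp h
    simp only [Finset.mem_filter] at ht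
    rw [← ht.2.1, ← ht.2.2]
    exact hA t
  have hd_le : ∀ u w, d u w ≤ 1 := by
    intro u w
    refine Finset.card_le_one.mpr ?_
    intro t ht t' ht'
    simp only [Finset.mem_filter, Finset.mem_Ico] at ht ht'
    exact hinj t t' ht.1.2 ht'.1.2 (ht.2.1.trans ht'.2.1.symm)
  have hd_both : ∀ u w, d u w ≠ 0 → d w u ≠ 0 → False := by
    intro u w h1 h2
    obtain ⟨t, ht⟩ := Finset.card_ne_zero.mp h1
    obtain ⟨t', ht'⟩ := Finset.card_ne_zero.mp h2
    simp only [Finset.mem_filter, Finset.mem_Ico] at ht ht'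
    obtain ⟨⟨hta, htb⟩, htu, htw⟩ := ht
    obtain ⟨⟨hta', htb'⟩, htw', htu'⟩ := ht'
    -- u ≠ w
    have huw : u ≠ w := by
      intro hc
      rcases Nat.lt_or_ge (t + 1) b with hlt | hge
      · have := hinj t (t + 1) htb hlt (by rw [htu, htw, ← hc])
        omega
      · have hb1 : t + 1 = b := by omega
        have : vv t = vv a := by rw [htu, hc, ← htw, hb1, hba]
        have := hinj t a htb (by omega) this
        omega
    rcases Nat.lt_or_ge (t + 1) b with hlt | hge
    · have het : t' = t + 1 := hinj t' (t + 1) htb' hlt (by rw [htw', htw])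
      rw [het] at htu'
      rcases Nat.lt_or_ge (t + 1 + 1) b with hlt2 | hge2
      · have := hinj (t + 1 + 1) t hlt2 htb (by rw [htu', htu])
        omega
      · have hb2 : t + 1 + 1 = b := by omega
        have : vv t = vv a := by rw [htu, ← htu', hb2, hba]
        have := hinj t a htb (by omega) this
        omega
    · have hb1 : t + 1 = b := by omega
      have hwa : vv a = w := by rw [← hba, ← hb1, htw]
      have het' : t' = a := hinj t' a htb' (by omega) (by rw [htw', hwa])
      rw [het'] at htu'
      have : a + 1 = t := hinj (a + 1) t (by omega) htb (by rw [htu', htu])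
      omega
  have hd_once : ∀ u w, d u w + d w u ≤ 1 := by
    intro u w
    rcases Nat.eq_zero_or_pos (d u w) with h1 | h1
    · rw [h1]; simpa using hd_le w u
    · rcases Nat.eq_zero_or_pos (d w u) with h2 | h2
      · rw [h2]; simpa using hd_le u w
      · exact absurd (hd_both u w (by omega) (by omega)) (by simp)
  -- conservation: #departures = #arrivals
  have hcons : ∀ u, ((Finset.Ico a b).filter (fun t => vv t = u)).card =
      ((Finset.Ico a b).filter (fun t => vv (t + 1) = u)).card := by
    intro u
    refine Finset.card_bij' (fun t _ => if t = a then b - 1 else t - 1)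
      (fun t _ => if t + 1 = b then a else t + 1) ?_ ?_ ?_ ?_
    · intro t ht
      simp only [Finset.mem_filter, Finset.mem_Ico] at ht ⊢
      by_cases hc : t = a
      · subst hc
        rw [if_pos rfl]
        have hb1 : b - 1 + 1 = b := by omega
        refine ⟨⟨by omega, by omega⟩, ?_⟩
        rw [hb1, hba, ht.2]
      · rw [if_neg hc]
        have h1 : t - 1 + 1 = t := by omega
        refine ⟨⟨by omega, by omega⟩, ?_⟩
        rw [h1, ht.2]
    · intro t ht
      simp only [Finset.mem_filter, Finset.mem_Ico] at ht ⊢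
      by_cases hc : t + 1 = b
      · rw [if_pos hc]
        refine ⟨⟨by omega, by omega⟩, ?_⟩
        rw [← hba, ← hc, ht.2]
      · rw [if_neg hc]
        exact ⟨⟨by omega, by omega⟩, ht.2⟩
    · intro t ht
      simp only [Finset.mem_filter, Finset.mem_Ico] at ht
      split_ifs <;> omega
    · intro t ht
      simp only [Finset.mem_filter, Finset.mem_Ico] at ht
      split_ifs <;> omega
  -- splitting the degree at a node along its (at most three) neighbours
  have gen_split : ∀ (u w1 w2 w3 : Bool × ℕ × ℕ), w1 ≠ w2 → w1 ≠ w3 → w2 ≠ w3 →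
      (∀ w, Adj n x u w → w = w1 ∨ w = w2 ∨ w = w3) →
      d u w1 + d u w2 + d u w3 = d w1 u + d w2 u + d w3 u := by
    intro u w1 w2 w3 h12 h13 h23 hcls
    have hout : ((Finset.Ico a b).filter (fun t => vv t = u)).card =
        d u w1 + d u w2 + d u w3 := by
      simp only [hd, Finset.card_filter, ← Finset.sum_add_distrib]
      refine Finset.sum_congr rfl ?_
      intro t _
      by_cases h1 : vv t = u
      · rcases hcls _ (h1 ▸ hA t) with hw | hw | hw <;>
          simp [h1, hw, h12, h13, h23, Ne.symm h12, Ne.symm h13, Ne.symm h23]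
      · simp [h1]
    have hin : ((Finset.Ico a b).filter (fun t => vv (t + 1) = u)).card =
        d w1 u + d w2 u + d w3 u := by
      simp only [hd, Finset.card_filter, ← Finset.sum_add_distrib]
      refine Finset.sum_congr rfl ?_
      intro t _
      by_cases h1 : vv (t + 1) = u
      · rcases hcls _ ((h1 ▸ hA t).symm) with hw | hw | hw <;>
          simp [h1, hw, h12, h13, h23, Ne.symm h12, Ne.symm h13, Ne.symm h23]
      · simp [h1]
    rw [← hout, ← hin, hcons u]
  -- net flow
  set ψ : (Bool × ℕ × ℕ) → (Bool × ℕ × ℕ) → ℤ := fun u w => (d u w : ℤ) - (d w u : ℤ) with hψ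
  have hψ_bound : ∀ u w, ψ u w = 1 ∨ ψ u w = 0 ∨ ψ u w = -1 := by
    intro u w
    have := hd_once u w
    simp only [hψ]
    omega
  have hψ_adj : ∀ u w, ψ u w ≠ 0 → Adj n x u w := by
    intro u w h
    by_cases h1 : d u w = 0
    · have h2 : d w u ≠ 0 := by
        simp only [hψ, h1] at h
        intro hc
        rw [hc] at h
        simp at h
      exact (hd_adj w u h2).symm
    · exact hd_adj u w h1
  have hψ_anti : ∀ u w, ψ u w = -ψ w u := by
    intro u w
    simp only [hψ]
    ring
  -- conservation at row nodes
  have hrowcons : ∀ i j, ψ (true, i, j+1) (false, i, j+1) + ψ (true, i, j+1) (true, i, j+2) +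
      ψ (true, i, j+1) (true, i, j) = 0 := by
    intro i j
    have hcls : ∀ w, Adj n x (true, i, j+1) w →
        w = (false, i, j+1) ∨ w = (true, i, j+2) ∨ w = (true, i, j) := by
      intro w h
      rcases adj_row h with h | h | ⟨h2, h⟩
      · exact Or.inl h
      · exact Or.inr (Or.inl h)
      · right; right
        simpa using h
    have h3 := gen_split (true, i, j+1) (false, i, j+1) (true, i, j+2) (true, i, j)
      (by simp) (by simp) (by simp) hcls
    simp only [hψ]
    omega
  have hcolcons : ∀ i j, ψ (false, i+1, j) (true, i+1, j) + ψ (false, i+1, j) (false, i+2, j) +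
      ψ (false, i+1, j) (false, i, j) = 0 := by
    intro i j
    have hcls : ∀ w, Adj n x (false, i+1, j) w →
        w = (true, i+1, j) ∨ w = (false, i+2, j) ∨ w = (false, i, j) := by
      intro w h
      rcases adj_col h with h | h | ⟨h2, h⟩
      · exact Or.inl h
      · exact Or.inr (Or.inl h)
      · right; right
        simpa using h
    have h3 := gen_split (false, i+1, j) (true, i+1, j) (false, i+2, j) (false, i, j)
      (by simp) (by simp) (by simp) hcls
    simp only [hψ]
    omega
  -- the push pattern
  set z : ℕ × ℕ → ℤ := fun s => ψ (true, s.1, s.2) (false, s.1, s.2) with hz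
  have hz_supp : ∀ s, z s ≠ 0 → (1 ≤ s.1 ∧ s.1 ≤ n ∧ 1 ≤ s.2 ∧ s.2 ≤ n) ∧ Frac (x s) := by
    intro s h
    have hadj := hψ_adj _ _ h
    have := adj_rc hadj
    refine ⟨⟨this.2.2.1.1, this.2.2.1.2.1, this.2.2.1.2.2.1, this.2.2.1.2.2.2⟩, ?_⟩
    have hs : (s.1, s.2) = s := rfl
    rw [← hs]
    exact this.2.2.2
  -- row telescope
  have hY1 : ∀ i j, ∑ j' ∈ Finset.Icc 1 j, z (i, j') = - ψ (true, i, j) (true, i, j+1) := by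
    intro i j
    induction j with
    | zero =>
      have h0 : ψ (true, i, 0) (true, i, 1) = 0 := by
        by_contra hc
        have := adj_rr (hψ_adj _ _ hc)
        omega
      simp [h0]
    | succ j ih =>
      rw [Finset.sum_Icc_succ_top (Nat.le_add_left 1 j)]
      rw [ih]
      have hc := hrowcons i j
      have ha := hψ_anti (true, i, j+1) (true, i, j)
      have : z (i, j+1) = ψ (true, i, j+1) (false, i, j+1) := rfl
      rw [this]
      linarith [hc, ha]
  have hY2 : ∀ j i, ∑ i' ∈ Finset.Icc 1 i, z (i', j) = ψ (false, i, j) (false, i+1, j) := by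
    intro j i
    induction i with
    | zero =>
      have h0 : ψ (false, 0, j) (false, 1, j) = 0 := by
        by_contra hc
        have := adj_cc (hψ_adj _ _ hc)
        omega
      simp [h0]
    | succ i ih =>
      rw [Finset.sum_Icc_succ_top (Nat.le_add_left 1 i)]
      rw [ih]
      have hc := hcolcons i j
      have ha := hψ_anti (false, i+1, j) (false, i, j)
      have ht : z (i+1, j) = - ψ (false, i+1, j) (true, i+1, j) := by
        have h1 : z (i+1, j) = ψ (true, i+1, j) (false, i+1, j) := rfl
        rw [h1, hψ_anti (true, i+1, j) (false, i+1, j)]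
      linarith [hc, ha, ht]
  -- a nonzero entry exists
  have hnz : ∃ s, z s ≠ 0 := by
    have hmem : a ∈ (Finset.Ico a b).filter (fun t => vv t = vv a ∧ vv (t+1) = vv (a+1)) :=
      Finset.mem_filter.mpr ⟨Finset.mem_Ico.mpr ⟨le_refl a, by omega⟩, rfl, rfl⟩
    have hda : d (vv a) (vv (a+1)) ≠ 0 := by
      rw [hd]
      exact Finset.card_ne_zero_of_mem hmem
    have honce := hd_once (vv a) (vv (a+1))
    have hψa : ψ (vv a) (vv (a+1)) ≠ 0 := by
      simp only [hψ]
      omega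
    have hAa := hA a
    rcases hAa with ⟨i, j, h1, h2, h3, h4, h5, ⟨hu, hv⟩ | ⟨hu, hv⟩⟩ |
      ⟨i, j, h1, h2, h3, h4, h5, ⟨hu, hv⟩ | ⟨hu, hv⟩⟩ |
      ⟨i, j, h1, h2, h3, h4, h5, ⟨hu, hv⟩ | ⟨hu, hv⟩⟩
    · exact ⟨(i, j), by rw [hu, hv] at hψa; exact hψa⟩
    · refine ⟨(i, j), fun hc => ?_⟩
      rw [hu, hv] at hψa
      have hzc : ψ (true, i, j) (false, i, j) = 0 := hc
      have : ψ (false, i, j) (true, i, j) = 0 := by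
        rw [hψ_anti (false, i, j) (true, i, j), hzc]
        ring
      exact hψa this
    · rw [hu, hv] at hψa
      have hsum : ∑ j' ∈ Finset.Icc 1 j, z (i, j') ≠ 0 := by
        rw [hY1 i j]
        exact neg_ne_zero.mpr hψa
      obtain ⟨j', -, hj'⟩ := Finset.exists_ne_zero_of_sum_ne_zero hsum
      exact ⟨(i, j'), hj'⟩
    · rw [hu, hv] at hψa
      have hψa' : ψ (true, i, j) (true, i, j+1) ≠ 0 := by
        intro hc
        apply hψa
        rw [hψ_anti (true, i, j+1) (true, i, j), hc]
        ring
      have hsum : ∑ j' ∈ Finset.Icc 1 j, z (i, j') ≠ 0 := by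
        rw [hY1 i j]
        exact neg_ne_zero.mpr hψa'
      obtain ⟨j', -, hj'⟩ := Finset.exists_ne_zero_of_sum_ne_zero hsum
      exact ⟨(i, j'), hj'⟩
    · rw [hu, hv] at hψa
      have hsum : ∑ i' ∈ Finset.Icc 1 i, z (i', j) ≠ 0 := by
        rw [hY2 j i]
        exact hψa
      obtain ⟨i', -, hi'⟩ := Finset.exists_ne_zero_of_sum_ne_zero hsum
      exact ⟨(i', j), hi'⟩
    · rw [hu, hv] at hψa
      have hψa' : ψ (false, i, j) (false, i+1, j) ≠ 0 := by
        intro hc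
        apply hψa
        rw [hψ_anti (false, i+1, j) (false, i, j), hc]
        ring
      have hsum : ∑ i' ∈ Finset.Icc 1 i, z (i', j) ≠ 0 := by
        rw [hY2 j i]
        exact hψa'
      obtain ⟨i', -, hi'⟩ := Finset.exists_ne_zero_of_sum_ne_zero hsum
      exact ⟨(i', j), hi'⟩
  refine ⟨z, hz_supp, fun s => hψ_bound _ _, fun i j => ⟨?_, ?_⟩, fun i j => ⟨?_, ?_⟩, hnz⟩
  · rcases hψ_bound (true, i, j) (true, i, j+1) with h | h | h <;> rw [hY1 i j, h] <;> norm_num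
  · intro hne
    rw [hY1 i j] at hne
    have hψne : ψ (true, i, j) (true, i, j+1) ≠ 0 := fun hc => hne (by rw [hc]; ring)
    exact (adj_rr (hψ_adj _ _ hψne)).2
  · rcases hψ_bound (false, i, j) (false, i+1, j) with h | h | h <;> rw [hY2 j i, h] <;> norm_num
  · intro hne
    rw [hY2 j i] at hne
    exact (adj_cc (hψ_adj _ _ hne)).2




/-- integer lower/upper bounds for the prefix sums of the extracted ASM -/
def L1 (k : ℕ) (A : ℕ × ℕ → ℤ) (i j : ℕ) : ℤ := max 0 (fsum A (hPrefix i j) - ((k : ℤ) - 1))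
def U1 (A : ℕ × ℕ → ℤ) (i j : ℕ) : ℤ := min 1 (fsum A (hPrefix i j))
def L2 (k : ℕ) (A : ℕ × ℕ → ℤ) (i j : ℕ) : ℤ := max 0 (fsum A (vPrefix i j) - ((k : ℤ) - 1))
def U2 (A : ℕ × ℕ → ℤ) (i j : ℕ) : ℤ := min 1 (fsum A (vPrefix i j))

/-- feasibility of a fractional extraction candidate -/
def Feas (k n : ℕ) (A : ℕ × ℕ → ℤ) (x : ℕ × ℕ → ℚ) : Prop :=
  ∀ i ∈ Finset.Icc 1 n, ∀ j ∈ Finset.Icc 1 n,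
    (A (i, j) = 0 → x (i, j) = 0) ∧
    (A (i, j) = 1 → 0 ≤ x (i, j) ∧ x (i, j) ≤ 1) ∧
    (A (i, j) = -1 → -1 ≤ x (i, j) ∧ x (i, j) ≤ 0) ∧
    ((L1 k A i j : ℚ) ≤ Py1 x i j ∧ Py1 x i j ≤ (U1 A i j : ℚ)) ∧
    ((L2 k A i j : ℚ) ≤ Py2 x i j ∧ Py2 x i j ≤ (U2 A i j : ℚ))

/-- the measure: number of fractional quantities -/
def μ (n : ℕ) (x : ℕ × ℕ → ℚ) : ℕ :=
  ((Smn n n).filter (fun s => Frac (x s))).card +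
  ((Smn n n).filter (fun s => Frac (Py1 x s.1 s.2))).card +
  ((Smn n n).filter (fun s => Frac (Py2 x s.1 s.2))).card

/-- directional distance to the next integer -/
def dir (q : ℚ) (e : ℤ) : ℚ := if 0 < e then (⌈q⌉ : ℚ) - q else q - (⌊q⌋ : ℚ)

lemma floor_lt_self {q : ℚ} (hq : Frac q) : (⌊q⌋ : ℚ) < q := by
  rcases lt_or_eq_of_le (Int.floor_le q) with h | h
  · exact h
  · exact absurd h.symm hq

lemma self_lt_ceil {q : ℚ} (hq : Frac q) : q < (⌈q⌉ : ℚ) := by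
  rcases lt_or_eq_of_le (Int.le_ceil q) with h | h
  · exact h
  · exfalso
    apply hq
    have hfl : ⌊q⌋ = ⌈q⌉ := by conv_lhs => rw [h, Int.floor_intCast]
    rw [hfl, ← h]

lemma dir_pos {q : ℚ} (hq : Frac q) (e : ℤ) : 0 < dir q e := by
  unfold dir
  split_ifs
  · linarith [self_lt_ceil hq]
  · linarith [floor_lt_self hq]

lemma stay_interval {q θ : ℚ} {e : ℤ} (he : e = 1 ∨ e = -1) (hθ : 0 < θ)
    (hle : θ ≤ dir q e) : (⌊q⌋ : ℚ) ≤ q + θ * e ∧ q + θ * e ≤ (⌈q⌉ : ℚ) := by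
  rcases he with rfl | rfl
  · unfold dir at hle
    rw [if_pos (by norm_num)] at hle
    constructor
    · have := Int.floor_le q
      push_cast
      linarith
    · push_cast
      linarith
  · unfold dir at hle
    rw [if_neg (by norm_num)] at hle
    constructor
    · have := Int.floor_le q
      push_cast
      linarith
    · have := Int.le_ceil q
      push_cast
      linarith

/-- the value after a full push in direction `e` is an integer -/
lemma push_integral {q : ℚ} {e : ℤ} (he : e = 1 ∨ e = -1) :
    ¬ Frac (q + dir q e * e) := by
  rcases he with rfl | rfl
  · unfold dir
    rw [if_pos (by norm_num)]
    refine notFrac_iff.mpr ⟨⌈q⌉, by push_cast; ring⟩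
  · unfold dir
    rw [if_neg (by norm_num)]
    refine notFrac_iff.mpr ⟨⌊q⌋, by push_cast; ring⟩



set_option maxHeartbeats 1000000 in
lemma push_step {k n : ℕ} {A : ℕ × ℕ → ℤ} {x : ℕ × ℕ → ℚ}
    (hx : Feas k n A x)
    (hxn : ∀ i, 1 ≤ i → i ≤ n → ¬ Frac (Py1 x i n))
    (hyn : ∀ j, 1 ≤ j → j ≤ n → ¬ Frac (Py2 x n j))
    {s0 : ℕ × ℕ} (hs0 : s0 ∈ Smn n n) (hf : Frac (x s0)) :
    ∃ x', Feas k n A x' ∧ μ n x' < μ n x := by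
  classical
  obtain ⟨⟨h11, h12⟩, h13, h14⟩ := mem_Smn.mp hs0
  obtain ⟨z, hz_supp, hz_pm, hzr, hzc, hnz⟩ := cycle_exists hxn hyn h11 h12 h13 h14 hf
  set Zr : ℕ → ℕ → ℤ := fun i j => ∑ j' ∈ Finset.Icc 1 j, z (i, j') with hZr
  set Zc : ℕ → ℕ → ℤ := fun i j => ∑ i' ∈ Finset.Icc 1 i, z (i', j) with hZc
  set Dx : Finset ℚ := ((Smn n n).filter (fun s => z s ≠ 0)).image
    (fun s => dir (x s) (z s)) with hDx
  set D1 : Finset ℚ := ((Smn n n).filter (fun s => Zr s.1 s.2 ≠ 0)).image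
    (fun s => dir (Py1 x s.1 s.2) (Zr s.1 s.2)) with hD1
  set D2 : Finset ℚ := ((Smn n n).filter (fun s => Zc s.1 s.2 ≠ 0)).image
    (fun s => dir (Py2 x s.1 s.2) (Zc s.1 s.2)) with hD2
  set D : Finset ℚ := Dx ∪ (D1 ∪ D2) with hD
  have hDne : D.Nonempty := by
    obtain ⟨s1, hs1⟩ := hnz
    have hmem : s1 ∈ (Smn n n).filter (fun s => z s ≠ 0) := by
      obtain ⟨⟨a1, a2, a3, a4⟩, -⟩ := hz_supp s1 hs1
      exact Finset.mem_filter.mpr ⟨mem_Smn.mpr ⟨⟨a1, a2⟩, ⟨a3, a4⟩⟩, hs1⟩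
    exact ⟨dir (x s1) (z s1), Finset.mem_union_left _ (Finset.mem_image_of_mem _ hmem)⟩
  set θ : ℚ := D.min' hDne with hθ
  have hθmem : θ ∈ D := D.min'_mem hDne
  have hθpos : 0 < θ := by
    have : ∀ q ∈ D, 0 < q := by
      intro q hq
      rcases Finset.mem_union.mp hq with hq | hq
      · obtain ⟨s1, hs1, rfl⟩ := Finset.mem_image.mp hq
        exact dir_pos (hz_supp s1 (Finset.mem_filter.mp hs1).2).2 _
      · rcases Finset.mem_union.mp hq with hq | hq
        · obtain ⟨s1, hs1, rfl⟩ := Finset.mem_image.mp hq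
          exact dir_pos ((hzr s1.1 s1.2).2 (Finset.mem_filter.mp hs1).2) _
        · obtain ⟨s1, hs1, rfl⟩ := Finset.mem_image.mp hq
          exact dir_pos ((hzc s1.1 s1.2).2 (Finset.mem_filter.mp hs1).2) _
    exact this θ hθmem
  set x' : ℕ × ℕ → ℚ := fun s => x s + θ * (z s : ℚ) with hx'
  have hPy1' : ∀ i j, Py1 x' i j = Py1 x i j + θ * (Zr i j : ℚ) := by
    intro i j
    simp only [hx', Py1, hZr]
    rw [Finset.sum_add_distrib, ← Finset.mul_sum]
    push_cast
    ring
  have hPy2' : ∀ i j, Py2 x' i j = Py2 x i j + θ * (Zc i j : ℚ) := by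
    intro i j
    simp only [hx', Py2, hZc]
    rw [Finset.sum_add_distrib, ← Finset.mul_sum]
    push_cast
    ring
  have pm_of_ne : ∀ (e : ℤ), (e = 1 ∨ e = 0 ∨ e = -1) → e ≠ 0 → (e = 1 ∨ e = -1) := by
    intro e h1 h2
    rcases h1 with h | h | h
    exacts [Or.inl h, absurd h h2, Or.inr h]
  -- generic bound keeping
  have bound_keep : ∀ (q : ℚ) (e : ℤ) (Lb Ub : ℤ), (Lb : ℚ) ≤ q → q ≤ (Ub : ℚ) →
      (e ≠ 0 → (e = 1 ∨ e = -1) ∧ Frac q ∧ θ ≤ dir q e) →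
      ((Lb : ℚ) ≤ q + θ * e ∧ q + θ * e ≤ (Ub : ℚ)) := by
    intro q e Lb Ub hl hu hcase
    by_cases he : e = 0
    · rw [he]
      push_cast
      constructor <;> linarith
    · obtain ⟨h1, hfr, hle⟩ := hcase he
      obtain ⟨hlo, hhi⟩ := stay_interval h1 hθpos hle
      constructor
      · have h2 : Lb ≤ ⌊q⌋ := Int.le_floor.mpr hl
        have h3 : (Lb : ℚ) ≤ (⌊q⌋ : ℚ) := by exact_mod_cast h2
        linarith
      · have h2 : ⌈q⌉ ≤ Ub := Int.ceil_le.mpr hu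
        have h3 : (⌈q⌉ : ℚ) ≤ (Ub : ℚ) := by exact_mod_cast h2
        linarith
  -- θ is below every supported directional distance
  have hθx : ∀ s ∈ Smn n n, z s ≠ 0 → θ ≤ dir (x s) (z s) := by
    intro s hs hzs
    exact D.min'_le _ (Finset.mem_union_left _
      (Finset.mem_image_of_mem _ (Finset.mem_filter.mpr ⟨hs, hzs⟩)))
  have hθ1 : ∀ s ∈ Smn n n, Zr s.1 s.2 ≠ 0 → θ ≤ dir (Py1 x s.1 s.2) (Zr s.1 s.2) := by
    intro s hs hzs
    exact D.min'_le _ (Finset.mem_union_right _ (Finset.mem_union_left _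
      (Finset.mem_image_of_mem _ (Finset.mem_filter.mpr ⟨hs, hzs⟩))))
  have hθ2 : ∀ s ∈ Smn n n, Zc s.1 s.2 ≠ 0 → θ ≤ dir (Py2 x s.1 s.2) (Zc s.1 s.2) := by
    intro s hs hzs
    exact D.min'_le _ (Finset.mem_union_right _ (Finset.mem_union_right _
      (Finset.mem_image_of_mem _ (Finset.mem_filter.mpr ⟨hs, hzs⟩))))
  have hFeas' : Feas k n A x' := by
    intro i hi j hj
    obtain ⟨o1, o2, o3, ⟨o4, o5⟩, o6, o7⟩ := hx i hi j hj
    simp only [Finset.mem_Icc] at hi hj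
    have hsmem : ((i, j) : ℕ × ℕ) ∈ Smn n n := mem_Smn.mpr ⟨⟨hi.1, hi.2⟩, ⟨hj.1, hj.2⟩⟩
    refine ⟨?_, ?_, ?_, ?_, ?_⟩
    · intro hA0
      have hz0 : z (i, j) = 0 := by
        by_contra hc
        have hfr := (hz_supp (i, j) hc).2
        rw [o1 hA0] at hfr
        exact notFrac_zero hfr
      simp only [hx', hz0, o1 hA0]
      norm_num
    · intro hA1
      have := bound_keep (x (i, j)) (z (i, j)) 0 1 (by push_cast; exact (o2 hA1).1)
        (by push_cast; exact (o2 hA1).2)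
        (fun he => ⟨pm_of_ne _ (hz_pm (i, j)) he,
          (hz_supp (i, j) he).2, hθx (i, j) hsmem he⟩)
      push_cast at this
      exact this
    · intro hA1
      have := bound_keep (x (i, j)) (z (i, j)) (-1) 0 (by push_cast; exact (o3 hA1).1)
        (by push_cast; exact (o3 hA1).2)
        (fun he => ⟨pm_of_ne _ (hz_pm (i, j)) he,
          (hz_supp (i, j) he).2, hθx (i, j) hsmem he⟩)
      push_cast at this
      exact this
    · rw [hPy1' i j]
      exact bound_keep (Py1 x i j) (Zr i j) (L1 k A i j) (U1 A i j) o4 o5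
        (fun he => ⟨pm_of_ne _ (hzr i j).1 he,
          (hzr i j).2 he, hθ1 (i, j) hsmem he⟩)
    · rw [hPy2' i j]
      exact bound_keep (Py2 x i j) (Zc i j) (L2 k A i j) (U2 A i j) o6 o7
        (fun he => ⟨pm_of_ne _ (hzc i j).1 he,
          (hzc i j).2 he, hθ2 (i, j) hsmem he⟩)
  -- measure decreases
  have hsub1 : (Smn n n).filter (fun s => Frac (x' s)) ⊆ (Smn n n).filter (fun s => Frac (x s)) := by
    intro s hs
    obtain ⟨hsm, hsf⟩ := Finset.mem_filter.mp hs
    refine Finset.mem_filter.mpr ⟨hsm, ?_⟩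
    by_cases hzs : z s = 0
    · simpa [hx', hzs] using hsf
    · exact (hz_supp s hzs).2
  have hsub2 : (Smn n n).filter (fun s => Frac (Py1 x' s.1 s.2)) ⊆
      (Smn n n).filter (fun s => Frac (Py1 x s.1 s.2)) := by
    intro s hs
    obtain ⟨hsm, hsf⟩ := Finset.mem_filter.mp hs
    refine Finset.mem_filter.mpr ⟨hsm, ?_⟩
    by_cases hzs : Zr s.1 s.2 = 0
    · rw [hPy1' s.1 s.2, hzs] at hsf
      simpa using hsf
    · exact (hzr s.1 s.2).2 hzs
  have hsub3 : (Smn n n).filter (fun s => Frac (Py2 x' s.1 s.2)) ⊆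
      (Smn n n).filter (fun s => Frac (Py2 x s.1 s.2)) := by
    intro s hs
    obtain ⟨hsm, hsf⟩ := Finset.mem_filter.mp hs
    refine Finset.mem_filter.mpr ⟨hsm, ?_⟩
    by_cases hzs : Zc s.1 s.2 = 0
    · rw [hPy2' s.1 s.2, hzs] at hsf
      simpa using hsf
    · exact (hzc s.1 s.2).2 hzs
  have hstrict : μ n x' < μ n x := by
    have c1 := Finset.card_le_card hsub1
    have c2 := Finset.card_le_card hsub2
    have c3 := Finset.card_le_card hsub3
    rcases Finset.mem_union.mp hθmem with hq | hq
    · obtain ⟨s1, hs1, hdir⟩ := Finset.mem_image.mp hq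
      obtain ⟨hs1m, hs1z⟩ := Finset.mem_filter.mp hs1
      have hint : ¬ Frac (x' s1) := by
        rw [hx']
        simp only
        rw [← hdir]
        exact push_integral (pm_of_ne _ (hz_pm s1) hs1z)
      have hold : s1 ∈ (Smn n n).filter (fun s => Frac (x s)) :=
        Finset.mem_filter.mpr ⟨hs1m, (hz_supp s1 hs1z).2⟩
      have hnew : s1 ∉ (Smn n n).filter (fun s => Frac (x' s)) := by
        intro hc
        exact hint (Finset.mem_filter.mp hc).2
      have : ((Smn n n).filter (fun s => Frac (x' s))).card <
          ((Smn n n).filter (fun s => Frac (x s))).card :=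
        Finset.card_lt_card ((Finset.ssubset_iff_of_subset hsub1).mpr ⟨s1, hold, hnew⟩)
      unfold μ
      omega
    · rcases Finset.mem_union.mp hq with hq | hq
      · obtain ⟨s1, hs1, hdir⟩ := Finset.mem_image.mp hq
        obtain ⟨hs1m, hs1z⟩ := Finset.mem_filter.mp hs1
        have hint : ¬ Frac (Py1 x' s1.1 s1.2) := by
          rw [hPy1' s1.1 s1.2, ← hdir]
          exact push_integral (pm_of_ne _ (hzr s1.1 s1.2).1 hs1z)
        have hold : s1 ∈ (Smn n n).filter (fun s => Frac (Py1 x s.1 s.2)) :=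
          Finset.mem_filter.mpr ⟨hs1m, (hzr s1.1 s1.2).2 hs1z⟩
        have hnew : s1 ∉ (Smn n n).filter (fun s => Frac (Py1 x' s.1 s.2)) := by
          intro hc
          exact hint (Finset.mem_filter.mp hc).2
        have : ((Smn n n).filter (fun s => Frac (Py1 x' s.1 s.2))).card <
            ((Smn n n).filter (fun s => Frac (Py1 x s.1 s.2))).card :=
          Finset.card_lt_card ((Finset.ssubset_iff_of_subset hsub2).mpr ⟨s1, hold, hnew⟩)
        unfold μ
        omega
      · obtain ⟨s1, hs1, hdir⟩ := Finset.mem_image.mp hq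
        obtain ⟨hs1m, hs1z⟩ := Finset.mem_filter.mp hs1
        have hint : ¬ Frac (Py2 x' s1.1 s1.2) := by
          rw [hPy2' s1.1 s1.2, ← hdir]
          exact push_integral (pm_of_ne _ (hzc s1.1 s1.2).1 hs1z)
        have hold : s1 ∈ (Smn n n).filter (fun s => Frac (Py2 x s.1 s.2)) :=
          Finset.mem_filter.mpr ⟨hs1m, (hzc s1.1 s1.2).2 hs1z⟩
        have hnew : s1 ∉ (Smn n n).filter (fun s => Frac (Py2 x' s.1 s.2)) := by
          intro hc
          exact hint (Finset.mem_filter.mp hc).2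
        have : ((Smn n n).filter (fun s => Frac (Py2 x' s.1 s.2))).card <
            ((Smn n n).filter (fun s => Frac (Py2 x s.1 s.2))).card :=
          Finset.card_lt_card ((Finset.ssubset_iff_of_subset hsub3).mpr ⟨s1, hold, hnew⟩)
        unfold μ
        omega
  exact ⟨x', hFeas', hstrict⟩



lemma feas_rown {k n : ℕ} {A : ℕ × ℕ → ℤ} {x : ℕ × ℕ → ℚ} (hk : 1 ≤ k)
    (hrow : ∀ i ∈ Finset.Icc 1 n, fsum A (hPrefix i n) = (k : ℤ))
    (hx : Feas k n A x) : ∀ i, 1 ≤ i → i ≤ n → Py1 x i n = 1 := by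
  intro i hi1 hi2
  have hin : i ∈ Finset.Icc 1 n := Finset.mem_Icc.mpr ⟨hi1, hi2⟩
  have hnn : n ∈ Finset.Icc 1 n := Finset.mem_Icc.mpr ⟨le_trans hi1 hi2, le_refl n⟩
  obtain ⟨-, -, -, ⟨hL, hU⟩, -⟩ := hx i hin n hnn
  have hF : fsum A (hPrefix i n) = (k : ℤ) := hrow i hin
  have hL1 : L1 k A i n = 1 := by
    unfold L1
    rw [hF]
    have : (k : ℤ) - ((k : ℤ) - 1) = 1 := by ring
    rw [this]
    simp
  have hU1 : U1 A i n = 1 := by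
    unfold U1
    rw [hF]
    have : (1 : ℤ) ≤ (k : ℤ) := by exact_mod_cast hk
    omega
  rw [hL1] at hL
  rw [hU1] at hU
  push_cast at hL hU
  linarith

lemma feas_coln {k n : ℕ} {A : ℕ × ℕ → ℤ} {x : ℕ × ℕ → ℚ} (hk : 1 ≤ k)
    (hcol : ∀ j ∈ Finset.Icc 1 n, fsum A (vPrefix n j) = (k : ℤ))
    (hx : Feas k n A x) : ∀ j, 1 ≤ j → j ≤ n → Py2 x n j = 1 := by
  intro j hj1 hj2
  have hjn : j ∈ Finset.Icc 1 n := Finset.mem_Icc.mpr ⟨hj1, hj2⟩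
  have hnn : n ∈ Finset.Icc 1 n := Finset.mem_Icc.mpr ⟨le_trans hj1 hj2, le_refl n⟩
  obtain ⟨-, -, -, -, hL, hU⟩ := hx n hnn j hjn
  have hF : fsum A (vPrefix n j) = (k : ℤ) := hcol j hjn
  have hL2 : L2 k A n j = 1 := by
    unfold L2
    rw [hF]
    have : (k : ℤ) - ((k : ℤ) - 1) = 1 := by ring
    rw [this]
    simp
  have hU2 : U2 A n j = 1 := by
    unfold U2
    rw [hF]
    have : (1 : ℤ) ≤ (k : ℤ) := by exact_mod_cast hk
    omega
  rw [hL2] at hL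
  rw [hU2] at hU
  push_cast at hL hU
  linarith

lemma notFrac_one : ¬ Frac (1 : ℚ) := notFrac_iff.mpr ⟨1, by norm_num⟩

lemma round {k n : ℕ} {A : ℕ × ℕ → ℤ} (hk : 1 ≤ k)
    (hrow : ∀ i ∈ Finset.Icc 1 n, fsum A (hPrefix i n) = (k : ℤ))
    (hcol : ∀ j ∈ Finset.Icc 1 n, fsum A (vPrefix n j) = (k : ℤ)) :
    ∀ (N : ℕ) (x : ℕ × ℕ → ℚ), Feas k n A x → μ n x ≤ N →
      ∃ y, Feas k n A y ∧ ∀ s ∈ Smn n n, ¬ Frac (y s) := by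
  intro N
  induction N with
  | zero =>
    intro x hx hμ
    refine ⟨x, hx, fun s hs hfr => ?_⟩
    have hmem : s ∈ (Smn n n).filter (fun s => Frac (x s)) := Finset.mem_filter.mpr ⟨hs, hfr⟩
    have := Finset.card_pos.mpr ⟨s, hmem⟩
    unfold μ at hμ
    omega
  | succ N ih =>
    intro x hx hμ
    by_cases hfr : ∃ s ∈ Smn n n, Frac (x s)
    · obtain ⟨s0, hs0, hf⟩ := hfr
      have hxn : ∀ i, 1 ≤ i → i ≤ n → ¬ Frac (Py1 x i n) := by
        intro i h1 h2
        rw [feas_rown hk hrow hx i h1 h2]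
        exact notFrac_one
      have hyn : ∀ j, 1 ≤ j → j ≤ n → ¬ Frac (Py2 x n j) := by
        intro j h1 h2
        rw [feas_coln hk hcol hx j h1 h2]
        exact notFrac_one
      obtain ⟨x', hx', hlt⟩ := push_step hx hxn hyn hs0 hf
      exact ih x' hx' (by omega)
    · push_neg at hfr
      exact ⟨x, hx, hfr⟩

lemma extract (k n : ℕ) (hk : 1 ≤ k) (A : ℕ × ℕ → ℤ)
    (hent : ∀ s ∈ Smn n n, A s = 0 ∨ A s = 1 ∨ A s = -1)
    (hrow : ∀ i ∈ Finset.Icc 1 n, fsum A (hPrefix i n) = (k : ℤ))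
    (hcol : ∀ j ∈ Finset.Icc 1 n, fsum A (vPrefix n j) = (k : ℤ))
    (hpre : ∀ i ∈ Finset.Icc 1 n, ∀ j ∈ Finset.Icc 1 n,
      (0 ≤ fsum A (hPrefix i j) ∧ fsum A (hPrefix i j) ≤ (k : ℤ)) ∧
      (0 ≤ fsum A (vPrefix i j) ∧ fsum A (vPrefix i j) ≤ (k : ℤ))) :
    ∃ B : ℕ × ℕ → ℤ,
      (∀ s ∈ Smn n n, B s = 0 ∨ B s = A s) ∧ IsASM n B ∧
      (∀ s ∈ Smn n n, (A s - B s) = 0 ∨ (A s - B s) = 1 ∨ (A s - B s) = -1) ∧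
      (∀ i ∈ Finset.Icc 1 n, fsum (fun s => A s - B s) (hPrefix i n) = (k : ℤ) - 1) ∧
      (∀ j ∈ Finset.Icc 1 n, fsum (fun s => A s - B s) (vPrefix n j) = (k : ℤ) - 1) ∧
      (∀ i ∈ Finset.Icc 1 n, ∀ j ∈ Finset.Icc 1 n,
        (0 ≤ fsum (fun s => A s - B s) (hPrefix i j) ∧
          fsum (fun s => A s - B s) (hPrefix i j) ≤ (k : ℤ) - 1) ∧
        (0 ≤ fsum (fun s => A s - B s) (vPrefix i j) ∧
          fsum (fun s => A s - B s) (vPrefix i j) ≤ (k : ℤ) - 1)) := by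
  classical
  have hk0 : (0 : ℚ) < (k : ℚ) := by exact_mod_cast hk
  have hk1 : (1 : ℚ) ≤ (k : ℚ) := by exact_mod_cast hk
  -- the fractional starting point A / k
  set x0 : ℕ × ℕ → ℚ := fun s => if s ∈ Smn n n then (A s : ℚ) / (k : ℚ) else 0 with hx0
  have hPy1x0 : ∀ i, i ∈ Finset.Icc 1 n → ∀ j, j ≤ n →
      Py1 x0 i j = (fsum A (hPrefix i j) : ℚ) / (k : ℚ) := by
    intro i hi j hj
    unfold Py1
    rw [fsum_hPrefix]
    push_cast
    rw [Finset.sum_div]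
    refine Finset.sum_congr rfl ?_
    intro j' hj'
    simp only [Finset.mem_Icc] at hj'
    have : ((i, j') : ℕ × ℕ) ∈ Smn n n := by
      simp only [Finset.mem_Icc] at hi
      exact mem_Smn.mpr ⟨⟨hi.1, hi.2⟩, ⟨hj'.1, le_trans hj'.2 hj⟩⟩
    rw [hx0]
    simp only [if_pos this]
  have hPy2x0 : ∀ j, j ∈ Finset.Icc 1 n → ∀ i, i ≤ n →
      Py2 x0 i j = (fsum A (vPrefix i j) : ℚ) / (k : ℚ) := by
    intro j hj i hi
    unfold Py2
    rw [fsum_vPrefix]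
    push_cast
    rw [Finset.sum_div]
    refine Finset.sum_congr rfl ?_
    intro i' hi'
    simp only [Finset.mem_Icc] at hi'
    have : ((i', j) : ℕ × ℕ) ∈ Smn n n := by
      simp only [Finset.mem_Icc] at hj
      exact mem_Smn.mpr ⟨⟨hi'.1, le_trans hi'.2 hi⟩, ⟨hj.1, hj.2⟩⟩
    rw [hx0]
    simp only [if_pos this]
  have hdiv_bounds : ∀ (F : ℤ), 0 ≤ F → F ≤ (k : ℤ) →
      (max 0 (F - ((k:ℤ) - 1)) : ℚ) ≤ (F : ℚ) / (k : ℚ) ∧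
      (F : ℚ) / (k : ℚ) ≤ (min 1 F : ℚ) := by
    intro F hF0 hFk
    have hF0' : (0 : ℚ) ≤ (F : ℚ) := by exact_mod_cast hF0
    have hFk' : (F : ℚ) ≤ (k : ℚ) := by exact_mod_cast hFk
    constructor
    · push_cast
      rw [max_le_iff]
      constructor
      · positivity
      · rw [le_div_iff₀ hk0]
        nlinarith [mul_nonneg (sub_nonneg.mpr hFk') (sub_nonneg.mpr hk1)]
    · push_cast
      rw [le_min_iff]
      constructor
      · rw [div_le_one hk0]
        exact hFk'
      · rw [div_le_iff₀ hk0]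
        nlinarith [mul_nonneg hF0' (sub_nonneg.mpr hk1)]
  have hFeas0 : Feas k n A x0 := by
    intro i hi j hj
    have hij : ((i, j) : ℕ × ℕ) ∈ Smn n n := by
      simp only [Finset.mem_Icc] at hi hj
      exact mem_Smn.mpr ⟨⟨hi.1, hi.2⟩, ⟨hj.1, hj.2⟩⟩
    have hx0v : x0 (i, j) = (A (i, j) : ℚ) / (k : ℚ) := by
      rw [hx0]
      simp only [if_pos hij]
    obtain ⟨⟨hp1, hp2⟩, hp3, hp4⟩ := hpre i hi j hj
    refine ⟨?_, ?_, ?_, ?_, ?_⟩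
    · intro h0
      rw [hx0v, h0]
      norm_num
    · intro h1
      rw [hx0v, h1]
      constructor
      · positivity
      · push_cast
        rw [div_le_one hk0]
        exact hk1
    · intro h1
      rw [hx0v, h1]
      constructor
      · rw [neg_le, ← neg_div]
        push_cast
        rw [div_le_one hk0]
        linarith
      · push_cast
        rw [div_nonpos_iff]
        right
        constructor <;> linarith
    · have h2 := hdiv_bounds _ hp1 hp2
      rw [hPy1x0 i hi j (Finset.mem_Icc.mp hj).2]
      unfold L1 U1
      push_cast at h2 ⊢
      exact h2
    · have h2 := hdiv_bounds _ hp3 hp4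
      rw [hPy2x0 j hj i (Finset.mem_Icc.mp hi).2]
      unfold L2 U2
      push_cast at h2 ⊢
      exact h2
  obtain ⟨y, hy, hyint⟩ := round hk hrow hcol (μ n x0) x0 hFeas0 (le_refl _)
  set B : ℕ × ℕ → ℤ := fun s => ⌊y s⌋ with hB
  have hBy : ∀ s ∈ Smn n n, ((B s : ℤ) : ℚ) = y s := by
    intro s hs
    exact (not_ne_iff.mp (hyint s hs)).symm
  have hfB1 : ∀ i ∈ Finset.Icc 1 n, ∀ j, j ≤ n → ((fsum B (hPrefix i j) : ℤ) : ℚ) = Py1 y i j := by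
    intro i hi j hj
    rw [fsum_hPrefix]
    push_cast
    unfold Py1
    refine Finset.sum_congr rfl ?_
    intro j' hj'
    simp only [Finset.mem_Icc] at hj' hi
    exact_mod_cast hBy (i, j') (mem_Smn.mpr ⟨⟨hi.1, hi.2⟩, ⟨hj'.1, le_trans hj'.2 hj⟩⟩)
  have hfB2 : ∀ j ∈ Finset.Icc 1 n, ∀ i, i ≤ n → ((fsum B (vPrefix i j) : ℤ) : ℚ) = Py2 y i j := by
    intro j hj i hi
    rw [fsum_vPrefix]
    push_cast
    unfold Py2
    refine Finset.sum_congr rfl ?_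
    intro i' hi'
    simp only [Finset.mem_Icc] at hi' hj
    exact_mod_cast hBy (i', j) (mem_Smn.mpr ⟨⟨hi'.1, le_trans hi'.2 hi⟩, ⟨hj.1, hj.2⟩⟩)
  have hbnd1 : ∀ i ∈ Finset.Icc 1 n, ∀ j ∈ Finset.Icc 1 n,
      max 0 (fsum A (hPrefix i j) - ((k:ℤ) - 1)) ≤ fsum B (hPrefix i j) ∧
      fsum B (hPrefix i j) ≤ min 1 (fsum A (hPrefix i j)) := by
    intro i hi j hj
    obtain ⟨-, -, -, ⟨l, u⟩, -⟩ := hy i hi j hj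
    rw [← hfB1 i hi j (Finset.mem_Icc.mp hj).2] at l u
    unfold L1 at l
    unfold U1 at u
    exact ⟨by exact_mod_cast l, by exact_mod_cast u⟩
  have hbnd2 : ∀ i ∈ Finset.Icc 1 n, ∀ j ∈ Finset.Icc 1 n,
      max 0 (fsum A (vPrefix i j) - ((k:ℤ) - 1)) ≤ fsum B (vPrefix i j) ∧
      fsum B (vPrefix i j) ≤ min 1 (fsum A (vPrefix i j)) := by
    intro i hi j hj
    obtain ⟨-, -, -, -, l, u⟩ := hy i hi j hj
    rw [← hfB2 j hj i (Finset.mem_Icc.mp hi).2] at l u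
    unfold L2 at l
    unfold U2 at u
    exact ⟨by exact_mod_cast l, by exact_mod_cast u⟩
  have hk' : (1 : ℤ) ≤ (k : ℤ) := by exact_mod_cast hk
  -- pattern containment
  have hpat : ∀ s ∈ Smn n n, B s = 0 ∨ B s = A s := by
    intro s hs
    obtain ⟨i, j⟩ := s
    have hmem := mem_Smn.mp hs
    have hicc : i ∈ Finset.Icc 1 n := Finset.mem_Icc.mpr hmem.1
    have hjcc : j ∈ Finset.Icc 1 n := Finset.mem_Icc.mpr hmem.2
    obtain ⟨o1, o2, o3, -⟩ := hy i hicc j hjcc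
    have hby := hBy (i, j) hs
    rcases hent (i, j) hs with h | h | h
    · left
      have : y (i, j) = 0 := o1 h
      rw [this] at hby
      exact_mod_cast hby
    · obtain ⟨u1, u2⟩ := o2 h
      rw [← hby] at u1 u2
      have v1 : (0 : ℤ) ≤ B (i, j) := by exact_mod_cast u1
      have v2 : B (i, j) ≤ 1 := by exact_mod_cast u2
      rw [h]
      omega
    · obtain ⟨u1, u2⟩ := o3 h
      rw [← hby] at u1 u2
      have v1 : (-1 : ℤ) ≤ B (i, j) := by exact_mod_cast u1
      have v2 : B (i, j) ≤ 0 := by exact_mod_cast u2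
      rw [h]
      omega
  -- row/column totals of B
  have hb_rowtot : ∀ i ∈ Finset.Icc 1 n, fsum B (hPrefix i n) = 1 := by
    intro i hi
    have hnn : n ∈ Finset.Icc 1 n := by
      simp only [Finset.mem_Icc] at hi ⊢
      omega
    have := hbnd1 i hi n hnn
    rw [hrow i hi] at this
    omega
  have hb_coltot : ∀ j ∈ Finset.Icc 1 n, fsum B (vPrefix n j) = 1 := by
    intro j hj
    have hnn : n ∈ Finset.Icc 1 n := by
      simp only [Finset.mem_Icc] at hj ⊢
      omega
    have := hbnd2 n hnn j hj
    rw [hcol j hj] at this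
    omega
  have hASM : IsASM n B := by
    refine ⟨fun i hi j hj => ⟨?_, ?_⟩, hb_rowtot, hb_coltot⟩
    · have h1 := hbnd1 i hi j hj
      have h2 := (hpre i hi j hj).1
      omega
    · have h1 := hbnd2 i hi j hj
      have h2 := (hpre i hi j hj).2
      omega
  refine ⟨B, hpat, hASM, ?_, ?_, ?_, ?_⟩
  · intro s hs
    rcases hpat s hs with h | h <;> rcases hent s hs with h' | h' | h' <;> omega
  · intro i hi
    rw [fsum_sub, hrow i hi, hb_rowtot i hi]
  · intro j hj
    rw [fsum_sub, hcol j hj, hb_coltot j hj]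
  · intro i hi j hj
    rw [fsum_sub, fsum_sub]
    have h1 := hbnd1 i hi j hj
    have h2 := hbnd2 i hi j hj
    have h3 := hpre i hi j hj
    constructor
    · omega
    · omega



lemma fsum_hPrefix_succ (x : ℕ × ℕ → ℤ) (i j : ℕ) :
    fsum x (hPrefix i (j + 1)) = fsum x (hPrefix i j) + x (i, j + 1) := by
  rw [fsum_hPrefix, fsum_hPrefix]
  exact Finset.sum_Icc_succ_top (Nat.le_add_left 1 j) _

theorem decomp : ∀ (k n : ℕ), 0 < n → ∀ (A : ℕ × ℕ → ℤ),
    (∀ s ∈ Smn n n, A s = 0 ∨ A s = 1 ∨ A s = -1) →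
    (∀ i ∈ Finset.Icc 1 n, fsum A (hPrefix i n) = (k : ℤ)) →
    (∀ j ∈ Finset.Icc 1 n, fsum A (vPrefix n j) = (k : ℤ)) →
    (∀ i ∈ Finset.Icc 1 n, ∀ j ∈ Finset.Icc 1 n,
      (0 ≤ fsum A (hPrefix i j) ∧ fsum A (hPrefix i j) ≤ (k : ℤ)) ∧
      (0 ≤ fsum A (vPrefix i j) ∧ fsum A (vPrefix i j) ≤ (k : ℤ))) →
    ∃ B : Fin k → (ℕ × ℕ → ℤ),
      (∀ l, IsASM n (B l)) ∧
      (∀ l l', l ≠ l' → ∀ s ∈ Smn n n, B l s = 0 ∨ B l' s = 0) ∧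
      (∀ s ∈ Smn n n, A s = ∑ l, B l s) := by
  intro k
  induction k with
  | zero =>
    intro n hn A hent hrow hcol hpre
    refine ⟨fun l => l.elim0, fun l => l.elim0, fun l => l.elim0, ?_⟩
    intro s hs
    rw [Fin.sum_univ_zero]
    obtain ⟨i, j⟩ := s
    obtain ⟨⟨hi1, hi2⟩, hj1, hj2⟩ := mem_Smn.mp hs
    have hicc : i ∈ Finset.Icc 1 n := Finset.mem_Icc.mpr ⟨hi1, hi2⟩
    obtain ⟨j', rfl⟩ := Nat.exists_eq_add_of_le' hj1
    have hz1 : fsum A (hPrefix i (j' + 1)) = 0 := by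
      have := (hpre i hicc (j' + 1) (Finset.mem_Icc.mpr ⟨hj1, hj2⟩)).1
      simp only [Nat.cast_zero] at this
      omega
    have hz0 : fsum A (hPrefix i j') = 0 := by
      rcases Nat.eq_zero_or_pos j' with rfl | hj'
      · rw [fsum_hPrefix]
        simp
      · have := (hpre i hicc j' (Finset.mem_Icc.mpr ⟨hj', by omega⟩)).1
        simp only [Nat.cast_zero] at this
        omega
    have := fsum_hPrefix_succ A i j'
    omega
  | succ k ih =>
    intro n hn A hent hrow hcol hpre
    obtain ⟨B0, hpat, hASM, hent', hrow', hcol', hpre'⟩ :=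
      extract (k + 1) n (by omega) A hent hrow hcol hpre
    have hcast : ((k + 1 : ℕ) : ℤ) - 1 = (k : ℤ) := by push_cast; ring
    rw [hcast] at hrow' hcol' hpre'
    obtain ⟨B, hB1, hB2, hB3⟩ := ih n hn (fun s => A s - B0 s) hent' hrow' hcol' hpre'
    refine ⟨Fin.cons B0 B, ?_, ?_, ?_⟩
    · intro l
      induction l using Fin.cases with
      | zero => simpa using hASM
      | succ l' => simpa using hB1 l'
    · intro l l' hne s hs
      have hzero : A s - B0 s = 0 → ∀ m, B m s = 0 := by
        intro h0 m
        by_contra hm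
        have hsum := hB3 s hs
        have hone : ∑ l, B l s = B m s := by
          refine Finset.sum_eq_single m ?_ ?_
          · intro l'' _ hne''
            rcases hB2 m l'' (Ne.symm hne'') s hs with h | h
            · exact absurd h hm
            · exact h
          · intro hcon
            exact absurd (Finset.mem_univ m) hcon
        rw [hone] at hsum
        omega
      induction l using Fin.cases with
      | zero =>
        induction l' using Fin.cases with
        | zero => exact absurd rfl hne
        | succ l1 =>
          by_cases hB0 : B0 s = 0
          · left
            simpa using hB0
          · right
            rcases hpat s hs with h | h
            · exact absurd h hB0
            · have : A s - B0 s = 0 := by omega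
              simpa using hzero this l1
      | succ l1 =>
        induction l' using Fin.cases with
        | zero =>
          by_cases hB0 : B0 s = 0
          · right
            simpa using hB0
          · left
            rcases hpat s hs with h | h
            · exact absurd h hB0
            · have : A s - B0 s = 0 := by omega
              simpa using hzero this l1
        | succ l2 =>
          have hne2 : l1 ≠ l2 := by
            intro hc
            exact hne (by rw [hc])
          have := hB2 l1 l2 hne2 s hs
          simpa using this
    · intro s hs
      rw [Fin.sum_univ_succ]
      simp only [Fin.cons_zero, Fin.cons_succ]
      have := hB3 s hs
      omega


end BD

/-- every k-regular alternating sign matrix is the sum of k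
pairwise pattern-disjoint alternating sign matrices (Brualdi–Dahl
conjecture, Corollary B+D.conj). -/
theorem stmt_15 (k n : ℕ) (hk : 0 < k) (hn : 0 < n) (A : ℕ × ℕ → ℤ)
    (hent : ∀ s ∈ Smn n n, A s = 0 ∨ A s = 1 ∨ A s = -1)
    (hrow : ∀ i ∈ Finset.Icc 1 n, fsum A (hPrefix i n) = (k : ℤ))
    (hcol : ∀ j ∈ Finset.Icc 1 n, fsum A (vPrefix n j) = (k : ℤ))
    (hpre : ∀ i ∈ Finset.Icc 1 n, ∀ j ∈ Finset.Icc 1 n,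
      (0 ≤ fsum A (hPrefix i j) ∧ fsum A (hPrefix i j) ≤ (k : ℤ)) ∧
      (0 ≤ fsum A (vPrefix i j) ∧ fsum A (vPrefix i j) ≤ (k : ℤ))) :
    ∃ B : Fin k → (ℕ × ℕ → ℤ),
      (∀ l, IsASM n (B l)) ∧
      (∀ l l', l ≠ l' → ∀ s ∈ Smn n n, B l s = 0 ∨ B l' s = 0) ∧
      (∀ s ∈ Smn n n, A s = ∑ l, B l s) :=
  BD.decomp k n hn A hent hrow hcol hpre
end

section
/- Let n ≥ 1 and let f, g : S_{n,n} → ℤ with f ≤ g. There exists an alternating sign matrix A of order n with f(i,j) ≤ A(i,j) ≤ g(i,j) for all (i,j) if and only if σ₁(X') + σ₂(X'') ≥ n + f̃(X' ∩ X'') − g̃(X'ᶜ ∩ X''ᶜ) holds for every X', X'' ⊆ S_{n,n}. -/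
/-!
An integer matrix `A` is an ASM of order `n` iff `Ã(X) ≤ σ₁(X)` and `Ã(X) ≤ σ₂(X)` for all
`X ⊆ S_{n,n}` and `Ã(S_{n,n}) = n`: the sum over a horizontal segment is a difference of two row
prefix sums, hence at most `1`; conversely a row prefix and its complement in the row are single
segments. Columns follow by transposition. Necessity of the condition is then inclusion-exclusion,
`Ã(X' ∩ X'') - Ã(X'ᶜ ∩ X''ᶜ) = Ã(X') + Ã(X'') - n`.

Sufficiency is by induction on `g̃(S) - f̃(S)`. When `f = g` the condition for the pairs
`(X, S)`, `(S, X)` and `(∅, ∅)` yields the characterisation of `f` being an ASM. Otherwise, at a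
cell with `f < g`, raising `f` or lowering `g` there preserves the condition, because `σ₁` and
`σ₂` are submodular while uncrossing two tight pairs only loses the nonnegative `g - f` on a
defect set containing that cell.
-/

open Finset

section Segments

variable {α : Type*} [DecidableEq α]

lemma card_filter_notMem_union_add_card_filter_notMem_inter_le (p : α → α) (X Y : Finset α) :
    #{s ∈ X ∪ Y | p s ∉ X ∪ Y} + #{s ∈ X ∩ Y | p s ∉ X ∩ Y} ≤
      #{s ∈ X | p s ∉ X} + #{s ∈ Y | p s ∉ Y} := by
  rw [← card_union_add_card_inter {s ∈ X | p s ∉ X}]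
  refine (card_union_add_card_inter _ _).symm.le.trans
    (add_le_add (card_le_card fun s => ?_) (card_le_card fun s => ?_)) <;>
  · simp only [mem_union, mem_inter, mem_filter]
    tauto

/-- Summation by parts along the chains of `X` under a predecessor map `p` with inverse `q`. -/
lemma sum_sub_comp_pred_eq {M : Type*} [AddCommGroup M] (X : Finset α) (p q : α → α)
    (hqp : ∀ s ∈ X, q (p s) = s) (hpq : ∀ s, p (q s) = s) (F : α → M) :
    ∑ s ∈ X, (F s - F (p s)) = ∑ s ∈ X with q s ∉ X, F s - ∑ s ∈ X with p s ∉ X, F (p s) := by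
  have hinner : ∑ s ∈ X with p s ∈ X, F (p s) = ∑ s ∈ X with q s ∈ X, F s := by
    refine sum_nbij' p q (fun s hs => ?_) (fun s hs => ?_) (fun s hs => ?_) (fun s _ => hpq s)
      (fun _ _ => rfl)
    · simp only [mem_filter] at hs ⊢
      exact ⟨hs.2, (hqp s hs.1).symm ▸ hs.1⟩
    · simp only [mem_filter] at hs ⊢
      exact ⟨hs.2, (hpq s).symm ▸ hs.1⟩
    · exact hqp s (mem_filter.1 hs).1
  rw [sum_sub_distrib, ← sum_filter_not_add_sum_filter X (fun s => q s ∈ X),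
    ← sum_filter_not_add_sum_filter X (fun s => p s ∈ X) (fun s => F (p s)), hinner]
  abel

end Segments

lemma mem_Smn {m n : ℕ} {s : ℕ × ℕ} : s ∈ Smn m n ↔ (1 ≤ s.1 ∧ s.1 ≤ m) ∧ (1 ≤ s.2 ∧ s.2 ≤ n) := by
  simp [Smn, mem_product]

@[simp]
lemma fsum_empty (w : ℕ × ℕ → ℤ) : fsum w ∅ = 0 :=
  sum_empty

lemma fsum_eq_sum_ite (w : ℕ × ℕ → ℤ) {S Z : Finset (ℕ × ℕ)} (hZ : Z ⊆ S) :
    fsum w Z = ∑ s ∈ S, if s ∈ Z then w s else 0 := by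
  rw [sum_ite_mem, inter_eq_right.2 hZ, fsum]

lemma fsum_add_single (w : ℕ × ℕ → ℤ) (s₀ : ℕ × ℕ) (c : ℤ) (Z : Finset (ℕ × ℕ)) :
    fsum (w + Pi.single s₀ c) Z = fsum w Z + if s₀ ∈ Z then c else 0 := by
  simp only [fsum, Pi.add_apply, sum_add_distrib, sum_pi_single']

lemma fsum_sub_single (w : ℕ × ℕ → ℤ) (s₀ : ℕ × ℕ) (c : ℤ) (Z : Finset (ℕ × ℕ)) :
    fsum (w - Pi.single s₀ c) Z = fsum w Z - if s₀ ∈ Z then c else 0 := by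
  simp only [fsum, Pi.sub_apply, sum_sub_distrib, sum_pi_single']

lemma fsum_inter_sub_fsum_sdiff_inter_sdiff (A : ℕ × ℕ → ℤ) {S X Y : Finset (ℕ × ℕ)}
    (hX : X ⊆ S) (hY : Y ⊆ S) :
    fsum A (X ∩ Y) - fsum A ((S \ X) ∩ (S \ Y)) = fsum A X + fsum A Y - fsum A S := by
  rw [← sdiff_union_distrib, fsum, fsum, fsum, fsum, fsum, sum_sdiff_eq_sub (union_subset hX hY),
    ← sum_union_inter]
  ring

lemma fsum_row (A : ℕ × ℕ → ℤ) (i : ℕ) (t : Finset ℕ) : fsum A ({i} ×ˢ t) = ∑ j ∈ t, A (i, j) := by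
  simp [fsum]

lemma fsum_Smn_eq_sum_rows (A : ℕ × ℕ → ℤ) (m n : ℕ) :
    fsum A (Smn m n) = ∑ i ∈ Icc 1 m, fsum A (hPrefix i n) := by
  simp only [fsum, Smn, hPrefix, sum_product, sum_singleton]

lemma fsum_hPrefix_sub_fsum_hPrefix_pred (A : ℕ × ℕ → ℤ) {i j : ℕ} (hj : 1 ≤ j) :
    fsum A (hPrefix i j) - fsum A (hPrefix i (j - 1)) = A (i, j) := by
  obtain ⟨k, rfl⟩ := Nat.exists_eq_add_of_le' hj
  simp only [hPrefix, fsum_row, Nat.add_sub_cancel, sum_Icc_succ_top (Nat.le_add_left 1 k)]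
  ring

lemma fsum_hPrefix_add_fsum_row_tail (A : ℕ × ℕ → ℤ) {i j n : ℕ} (hjn : j ≤ n) :
    fsum A (hPrefix i j) + fsum A ({i} ×ˢ Icc (j + 1) n) = fsum A (hPrefix i n) := by
  rw [hPrefix, hPrefix, fsum_row, fsum_row, fsum_row, ← sum_union]
  · congr 1; ext; simp only [mem_union, mem_Icc]; omega
  · rw [disjoint_left]; intro; simp only [mem_Icc]; omega

lemma sigma1_row_interval_le_one (i a b : ℕ) : sigma1 ({i} ×ˢ Icc a b) ≤ 1 := by
  refine (card_le_card fun s hs => ?_).trans (card_singleton (i, a)).le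
  simp only [hStarts, mem_filter, mem_product, mem_singleton, mem_Icc] at hs
  simp only [mem_singleton, Prod.ext_iff]
  omega

lemma sigma1_Smn_le (m n : ℕ) : sigma1 (Smn m n) ≤ m := by
  refine (card_le_card (t := Icc 1 m ×ˢ {1}) fun s hs => ?_).trans (by simp)
  simp only [hStarts, mem_filter, mem_Smn] at hs
  simp only [mem_product, mem_Icc, mem_singleton]
  omega

lemma sigma1_union_add_sigma1_inter_le (X Y : Finset (ℕ × ℕ)) :
    sigma1 (X ∪ Y) + sigma1 (X ∩ Y) ≤ sigma1 X + sigma1 Y :=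
  card_filter_notMem_union_add_card_filter_notMem_inter_le (fun s => (s.1, s.2 - 1)) X Y

lemma sigma2_union_add_sigma2_inter_le (X Y : Finset (ℕ × ℕ)) :
    sigma2 (X ∪ Y) + sigma2 (X ∩ Y) ≤ sigma2 X + sigma2 Y :=
  card_filter_notMem_union_add_card_filter_notMem_inter_le (fun s => (s.1 - 1, s.2)) X Y

lemma fsum_le_sigma1_of_prefix_bounds {A : ℕ × ℕ → ℤ} {X : Finset (ℕ × ℕ)} (hX : ∀ s ∈ X, 1 ≤ s.2)
    (hle : ∀ s ∈ X, fsum A (hPrefix s.1 s.2) ≤ 1)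
    (hnonneg : ∀ s ∈ X, 0 ≤ fsum A (hPrefix s.1 (s.2 - 1))) :
    fsum A X ≤ sigma1 X := by
  have htele := sum_sub_comp_pred_eq (M := ℤ) X (fun s => (s.1, s.2 - 1)) (fun s => (s.1, s.2 + 1))
    (fun s hs => Prod.ext rfl (Nat.sub_add_cancel (hX s hs))) (fun _ => rfl)
  have hends : (#(hEnds X) : ℤ) = sigma1 X := by
    -- with `F = 1`: as many segments end as start
    have := htele (fun _ => (1 : ℤ))
    simp only [sub_self, sum_const_zero, sum_const, nsmul_one] at this
    exact (sub_eq_zero.1 this.symm)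
  calc fsum A X = ∑ s ∈ X, (fsum A (hPrefix s.1 s.2) - fsum A (hPrefix s.1 (s.2 - 1))) :=
        sum_congr rfl fun s hs => (fsum_hPrefix_sub_fsum_hPrefix_pred A (hX s hs)).symm
    _ = ∑ s ∈ hEnds X, fsum A (hPrefix s.1 s.2) -
          ∑ s ∈ hStarts X, fsum A (hPrefix s.1 (s.2 - 1)) :=
        htele fun s => fsum A (hPrefix s.1 s.2)
    _ ≤ ∑ s ∈ hEnds X, 1 - 0 :=
        sub_le_sub (sum_le_sum fun s hs => hle s (mem_filter.1 hs).1)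
          (sum_nonneg fun s hs => hnonneg s (mem_filter.1 hs).1)
    _ = sigma1 X := by rw [sum_const, nsmul_one, sub_zero, hends]

def transposeSet (X : Finset (ℕ × ℕ)) : Finset (ℕ × ℕ) := X.map (Equiv.prodComm ℕ ℕ).toEmbedding

@[simp]
lemma mem_transposeSet {X : Finset (ℕ × ℕ)} {s : ℕ × ℕ} : s ∈ transposeSet X ↔ s.swap ∈ X :=
  mem_map_equiv

@[simp]
lemma transposeSet_transposeSet (X : Finset (ℕ × ℕ)) : transposeSet (transposeSet X) = X := by
  ext; simp

lemma transposeSet_Smn (m n : ℕ) : transposeSet (Smn m n) = Smn n m := by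
  ext; simp only [mem_transposeSet, mem_Smn, Prod.fst_swap, Prod.snd_swap]; tauto

lemma transposeSet_subset_Smn {m n : ℕ} {X : Finset (ℕ × ℕ)} (hX : X ⊆ Smn m n) :
    transposeSet X ⊆ Smn n m :=
  transposeSet_Smn m n ▸ map_subset_map.2 hX

lemma fsum_transposeSet (A : ℕ × ℕ → ℤ) (X : Finset (ℕ × ℕ)) :
    fsum A (transposeSet X) = fsum (A ∘ Prod.swap) X :=
  sum_map _ _ _

lemma vPrefix_eq_transposeSet (i j : ℕ) : vPrefix i j = transposeSet (hPrefix j i) := by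
  ext
  simp only [vPrefix, hPrefix, mem_transposeSet, mem_product, mem_singleton, Prod.fst_swap,
    Prod.snd_swap]
  tauto

lemma sigma2_eq_sigma1_transposeSet (X : Finset (ℕ × ℕ)) : sigma2 X = sigma1 (transposeSet X) := by
  rw [sigma2, sigma1, ← card_map (Equiv.prodComm ℕ ℕ).toEmbedding]
  congr 1
  ext s
  simp [vStarts, hStarts, mem_map_equiv]

def IsRowAlternating (n : ℕ) (A : ℕ × ℕ → ℤ) : Prop :=
  (∀ i ∈ Icc 1 n, ∀ j ∈ Icc 1 n, fsum A (hPrefix i j) = 0 ∨ fsum A (hPrefix i j) = 1) ∧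
    ∀ i ∈ Icc 1 n, fsum A (hPrefix i n) = 1

lemma isASM_iff_isRowAlternating {n : ℕ} {A : ℕ × ℕ → ℤ} :
    IsASM n A ↔ IsRowAlternating n A ∧ IsRowAlternating n (A ∘ Prod.swap) := by
  simp only [IsASM, IsRowAlternating, vPrefix_eq_transposeSet, fsum_transposeSet]
  constructor
  · rintro ⟨hpre, hrow, hcol⟩
    exact ⟨⟨fun i hi j hj => (hpre i hi j hj).1, hrow⟩,
      ⟨fun j hj i hi => (hpre i hi j hj).2, hcol⟩⟩
  · rintro ⟨⟨hpre, hrow⟩, ⟨hpre', hcol⟩⟩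
    exact ⟨fun i hi j hj => ⟨hpre i hi j hj, hpre' j hj i hi⟩, hrow, hcol⟩

lemma IsRowAlternating.fsum_le_sigma1 {n : ℕ} {A : ℕ × ℕ → ℤ} (hA : IsRowAlternating n A)
    {X : Finset (ℕ × ℕ)} (hX : X ⊆ Smn n n) : fsum A X ≤ sigma1 X := by
  refine fsum_le_sigma1_of_prefix_bounds (fun s hs => (mem_Smn.1 (hX hs)).2.1)
    (fun s hs => ?_) (fun s hs => ?_)
  · obtain ⟨⟨hi, hi'⟩, hj, hj'⟩ := mem_Smn.1 (hX hs)
    rcases hA.1 s.1 (mem_Icc.2 ⟨hi, hi'⟩) s.2 (mem_Icc.2 ⟨hj, hj'⟩) with h | h <;> omega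
  · obtain ⟨⟨hi, hi'⟩, hj, hj'⟩ := mem_Smn.1 (hX hs)
    rcases Nat.eq_zero_or_pos (s.2 - 1) with h0 | hpos
    · simp [h0, hPrefix, fsum]
    · rcases hA.1 s.1 (mem_Icc.2 ⟨hi, hi'⟩) (s.2 - 1) (mem_Icc.2 ⟨hpos, by omega⟩)
        with h | h <;> omega

lemma IsRowAlternating.fsum_Smn {n : ℕ} {A : ℕ × ℕ → ℤ} (hA : IsRowAlternating n A) :
    fsum A (Smn n n) = n := by
  rw [fsum_Smn_eq_sum_rows, sum_congr rfl hA.2]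
  simp

lemma isRowAlternating_of_fsum_le_sigma1 {n : ℕ} {A : ℕ × ℕ → ℤ}
    (hle : ∀ X ⊆ Smn n n, fsum A X ≤ sigma1 X) (htotal : fsum A (Smn n n) = n) :
    IsRowAlternating n A := by
  have hrow_le : ∀ i ∈ Icc 1 n, ∀ j ≤ n, fsum A (hPrefix i j) ≤ 1 := fun i hi j hj =>
    (hle _ fun s hs => by
      simp only [hPrefix, mem_product, mem_singleton, mem_Icc, mem_Smn] at hi hs ⊢; omega).trans
      (by exact_mod_cast sigma1_row_interval_le_one i 1 j)
  have hrow : ∀ i ∈ Icc 1 n, fsum A (hPrefix i n) = 1 := by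
    have hsum : ∑ i ∈ Icc 1 n, (1 - fsum A (hPrefix i n)) = 0 := by
      rw [sum_sub_distrib, ← fsum_Smn_eq_sum_rows, htotal]; simp
    intro i hi
    have := (sum_eq_zero_iff_of_nonneg fun i hi => sub_nonneg.2 (hrow_le i hi n le_rfl)).1
      hsum i hi
    omega
  refine ⟨fun i hi j hj => ?_, hrow⟩
  have htail : fsum A ({i} ×ˢ Icc (j + 1) n) ≤ 1 :=
    (hle _ fun s hs => by
      simp only [mem_product, mem_singleton, mem_Icc, mem_Smn] at hi hj hs ⊢; omega).trans
      (by exact_mod_cast sigma1_row_interval_le_one i (j + 1) n)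
  have hsplit := fsum_hPrefix_add_fsum_row_tail A (i := i) (mem_Icc.1 hj).2
  have := hrow_le i hi j (mem_Icc.1 hj).2
  have := hrow i hi
  omega

lemma isRowAlternating_iff {n : ℕ} {A : ℕ × ℕ → ℤ} :
    IsRowAlternating n A ↔ (∀ X ⊆ Smn n n, fsum A X ≤ sigma1 X) ∧ fsum A (Smn n n) = n :=
  ⟨fun hA => ⟨fun _ => hA.fsum_le_sigma1, hA.fsum_Smn⟩,
    fun ⟨hle, htotal⟩ => isRowAlternating_of_fsum_le_sigma1 hle htotal⟩

lemma forall_fsum_comp_swap_le_sigma1_iff {n : ℕ} {A : ℕ × ℕ → ℤ} :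
    (∀ X ⊆ Smn n n, fsum (A ∘ Prod.swap) X ≤ sigma1 X) ↔ ∀ X ⊆ Smn n n, fsum A X ≤ sigma2 X := by
  constructor
  · intro h X hX
    simpa [sigma2_eq_sigma1_transposeSet, ← fsum_transposeSet] using
      h _ (transposeSet_subset_Smn hX)
  · intro h X hX
    simpa [sigma2_eq_sigma1_transposeSet, fsum_transposeSet] using
      h _ (transposeSet_subset_Smn hX)

lemma isASM_iff {n : ℕ} {A : ℕ × ℕ → ℤ} :
    IsASM n A ↔ (∀ X ⊆ Smn n n, fsum A X ≤ sigma1 X) ∧ (∀ X ⊆ Smn n n, fsum A X ≤ sigma2 X) ∧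
      fsum A (Smn n n) = n := by
  rw [isASM_iff_isRowAlternating, isRowAlternating_iff, isRowAlternating_iff,
    forall_fsum_comp_swap_le_sigma1_iff, ← fsum_transposeSet, transposeSet_Smn]
  tauto

def ASMBoundCondition (n : ℕ) (f g : ℕ × ℕ → ℤ) : Prop :=
  ∀ X' ⊆ Smn n n, ∀ X'' ⊆ Smn n n,
    (n : ℤ) + fsum f (X' ∩ X'') - fsum g ((Smn n n \ X') ∩ (Smn n n \ X'')) ≤
      (sigma1 X' : ℤ) + (sigma2 X'' : ℤ)

lemma asmBoundCondition_of_isASM {n : ℕ} {f g A : ℕ × ℕ → ℤ} (hA : IsASM n A)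
    (hfAg : ∀ s ∈ Smn n n, f s ≤ A s ∧ A s ≤ g s) : ASMBoundCondition n f g := by
  obtain ⟨hsigma1, hsigma2, htotal⟩ := isASM_iff.1 hA
  intro X' hX' X'' hX''
  have hf : fsum f (X' ∩ X'') ≤ fsum A (X' ∩ X'') :=
    sum_le_sum fun s hs => (hfAg s (hX' (mem_inter.1 hs).1)).1
  have hg : fsum A ((Smn n n \ X') ∩ (Smn n n \ X'')) ≤ fsum g ((Smn n n \ X') ∩ (Smn n n \ X'')) :=
    sum_le_sum fun s hs => (hfAg s (sdiff_subset (mem_inter.1 hs).1)).2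
  linarith [fsum_inter_sub_fsum_sdiff_inter_sdiff A hX' hX'', hsigma1 X' hX', hsigma2 X'' hX'']

lemma isASM_of_asmBoundCondition {n : ℕ} {f g : ℕ × ℕ → ℤ} (hfg : ∀ s ∈ Smn n n, f s = g s)
    (h : ASMBoundCondition n f g) : IsASM n f := by
  have hsigma1_Smn : (sigma1 (Smn n n) : ℤ) ≤ n := by exact_mod_cast sigma1_Smn_le n n
  have hsigma2_Smn : (sigma2 (Smn n n) : ℤ) ≤ n := by
    rw [sigma2_eq_sigma1_transposeSet, transposeSet_Smn]; exact hsigma1_Smn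
  have hsigma1 : ∀ X ⊆ Smn n n, fsum f X ≤ sigma1 X := fun X hX => by
    have := h X hX _ subset_rfl
    rw [inter_eq_left.2 hX, sdiff_self, bot_eq_empty, inter_empty] at this
    linarith [fsum_empty g]
  have hsigma2 : ∀ X ⊆ Smn n n, fsum f X ≤ sigma2 X := fun X hX => by
    have := h _ subset_rfl X hX
    rw [inter_eq_right.2 hX, sdiff_self, bot_eq_empty, empty_inter] at this
    linarith [fsum_empty g]
  have hlower := h ∅ (empty_subset _) ∅ (empty_subset _)
  simp only [inter_self, sdiff_empty, sigma1, sigma2, hStarts, vStarts, filter_empty,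
    card_empty, Nat.cast_zero] at hlower
  have hfS : fsum f (Smn n n) = fsum g (Smn n n) := sum_congr rfl hfg
  rw [isASM_iff]
  refine ⟨hsigma1, hsigma2, le_antisymm ((hsigma1 _ subset_rfl).trans hsigma1_Smn) ?_⟩
  linarith [fsum_empty f]

/-- Uncrossing `(X₁, X₂)` and `(Y₁, Y₂)` into `(X₁ ∪ Y₁, X₂ ∩ Y₂)` and `(X₁ ∩ Y₁, X₂ ∪ Y₂)`: without
the `s₀` term the two sides differ by the sum of `g - f` over the cells of `X₁ ∩ X₂` outside
`Y₁ ∪ Y₂` and of `Y₁ ∩ Y₂` outside `X₁ ∪ X₂`, among them `s₀`. -/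
lemma fsum_uncross_le {S X₁ X₂ Y₁ Y₂ : Finset (ℕ × ℕ)} {f g : ℕ × ℕ → ℤ}
    (hX₁ : X₁ ⊆ S) (hX₂ : X₂ ⊆ S) (hY₁ : Y₁ ⊆ S) (hfg : ∀ s ∈ S, f s ≤ g s) {s₀ : ℕ × ℕ}
    (hsX : s₀ ∈ X₁ ∩ X₂) (hsY : s₀ ∈ (S \ Y₁) ∩ (S \ Y₂)) :
    (fsum f (X₁ ∩ X₂) - fsum g ((S \ X₁) ∩ (S \ X₂))) +
        (fsum f (Y₁ ∩ Y₂) - fsum g ((S \ Y₁) ∩ (S \ Y₂))) + (g s₀ - f s₀) ≤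
      (fsum f ((X₁ ∪ Y₁) ∩ (X₂ ∩ Y₂)) - fsum g ((S \ (X₁ ∪ Y₁)) ∩ (S \ (X₂ ∩ Y₂)))) +
        (fsum f ((X₁ ∩ Y₁) ∩ (X₂ ∪ Y₂)) - fsum g ((S \ (X₁ ∩ Y₁)) ∩ (S \ (X₂ ∪ Y₂)))) := by
  have hcompl (U V : Finset (ℕ × ℕ)) : (S \ U) ∩ (S \ V) ⊆ S :=
    inter_subset_left.trans sdiff_subset
  have hs₀ : g s₀ - f s₀ = ∑ s ∈ S, if s = s₀ then g s - f s else 0 := by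
    rw [sum_ite_eq' S s₀, if_pos (mem_sdiff.1 (mem_inter.1 hsY).1).1]
  rw [hs₀, fsum_eq_sum_ite f (inter_subset_left.trans hX₁), fsum_eq_sum_ite g (hcompl _ _),
    fsum_eq_sum_ite f (inter_subset_left.trans hY₁), fsum_eq_sum_ite g (hcompl _ _),
    fsum_eq_sum_ite f (inter_subset_right.trans (inter_subset_left.trans hX₂)),
    fsum_eq_sum_ite g (hcompl _ _),
    fsum_eq_sum_ite f (inter_subset_left.trans (inter_subset_left.trans hX₁)),
    fsum_eq_sum_ite g (hcompl _ _)]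
  simp only [← sum_sub_distrib, ← sum_add_distrib]
  refine sum_le_sum fun s hs => ?_
  have := hfg s hs
  simp only [mem_inter, mem_union, mem_sdiff] at hsX hsY ⊢
  by_cases h₀ : s = s₀
  · subst h₀
    simp [hs, hsX, hsY]
    linarith
  · by_cases h₁ : s ∈ X₁ <;> by_cases h₂ : s ∈ X₂ <;> by_cases h₃ : s ∈ Y₁ <;>
      by_cases h₄ : s ∈ Y₂ <;> simp [hs, h₀, h₁, h₂, h₃, h₄] <;> linarith

/-- If both narrowings failed, the witnessing pairs would be tight for `(f, g)`, and by
submodularity of `σ₁`, `σ₂` one of their two uncrossings would violate the condition. -/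
lemma asmBoundCondition_add_single_or_sub_single {n : ℕ} {f g : ℕ × ℕ → ℤ}
    (hfg : ∀ s ∈ Smn n n, f s ≤ g s) (h : ASMBoundCondition n f g) {s₀ : ℕ × ℕ}
    (hlt : f s₀ < g s₀) :
    ASMBoundCondition n (f + Pi.single s₀ 1) g ∨ ASMBoundCondition n f (g - Pi.single s₀ 1) := by
  by_contra! hnot
  obtain ⟨hf, hg⟩ := hnot
  simp only [ASMBoundCondition, not_forall, not_le, exists_prop, fsum_add_single,
    fsum_sub_single] at hf hg
  obtain ⟨X₁, hX₁, X₂, hX₂, hX⟩ := hf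
  obtain ⟨Y₁, hY₁, Y₂, hY₂, hY⟩ := hg
  have hXf := h X₁ hX₁ X₂ hX₂
  have hYf := h Y₁ hY₁ Y₂ hY₂
  have hsX : s₀ ∈ X₁ ∩ X₂ := by
    by_contra hs; rw [if_neg hs] at hX; linarith
  have hsY : s₀ ∈ (Smn n n \ Y₁) ∩ (Smn n n \ Y₂) := by
    by_contra hs; rw [if_neg hs] at hY; linarith
  rw [if_pos hsX] at hX
  rw [if_pos hsY] at hY
  have hU := h (X₁ ∪ Y₁) (union_subset hX₁ hY₁) (X₂ ∩ Y₂) (inter_subset_left.trans hX₂)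
  have hV := h (X₁ ∩ Y₁) (inter_subset_left.trans hX₁) (X₂ ∪ Y₂) (union_subset hX₂ hY₂)
  have huncross := fsum_uncross_le hX₁ hX₂ hY₁ hfg hsX hsY
  have hsigma1 : (sigma1 (X₁ ∪ Y₁) : ℤ) + sigma1 (X₁ ∩ Y₁) ≤ sigma1 X₁ + sigma1 Y₁ := by
    exact_mod_cast sigma1_union_add_sigma1_inter_le X₁ Y₁
  have hsigma2 : (sigma2 (X₂ ∪ Y₂) : ℤ) + sigma2 (X₂ ∩ Y₂) ≤ sigma2 X₂ + sigma2 Y₂ := by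
    exact_mod_cast sigma2_union_add_sigma2_inter_le X₂ Y₂
  linarith

lemma exists_isASM_of_asmBoundCondition {n : ℕ} {f g : ℕ × ℕ → ℤ}
    (hfg : ∀ s ∈ Smn n n, f s ≤ g s) (h : ASMBoundCondition n f g) :
    ∃ A, IsASM n A ∧ ∀ s ∈ Smn n n, f s ≤ A s ∧ A s ≤ g s := by
  induction hN : (fsum g (Smn n n) - fsum f (Smn n n)).toNat using Nat.strong_induction_on
    generalizing f g with
  | _ N ih =>
  by_cases heq : ∀ s ∈ Smn n n, f s = g s
  · exact ⟨f, isASM_of_asmBoundCondition heq h, fun s hs => ⟨le_rfl, hfg s hs⟩⟩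
  push Not at heq
  obtain ⟨s₀, hs₀, hne⟩ := heq
  have narrow : ∀ f' g' : ℕ × ℕ → ℤ,
      (∀ s ∈ Smn n n, f s ≤ f' s ∧ f' s ≤ g' s ∧ g' s ≤ g s) → ASMBoundCondition n f' g' →
      fsum g' (Smn n n) - fsum f' (Smn n n) = fsum g (Smn n n) - fsum f (Smn n n) - 1 →
      ∃ A, IsASM n A ∧ ∀ s ∈ Smn n n, f s ≤ A s ∧ A s ≤ g s := by
    intro f' g' hf'g' h' hsum
    have : 0 ≤ fsum g' (Smn n n) - fsum f' (Smn n n) :=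
      sub_nonneg.2 (sum_le_sum fun s hs => (hf'g' s hs).2.1)
    obtain ⟨A, hA, hf'Ag'⟩ := ih _ (by omega) (fun s hs => (hf'g' s hs).2.1) h' rfl
    exact ⟨A, hA, fun s hs => ⟨(hf'g' s hs).1.trans (hf'Ag' s hs).1,
      (hf'Ag' s hs).2.trans (hf'g' s hs).2.2⟩⟩
  have hlt := lt_of_le_of_ne (hfg s₀ hs₀) hne
  rcases asmBoundCondition_add_single_or_sub_single hfg h hlt with h' | h'
  · refine narrow _ _ (fun s hs => ?_) h' ?_
    · have := hfg s hs
      by_cases hs' : s = s₀ <;> simp [hs'] <;> omega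
    · rw [fsum_add_single, if_pos hs₀]; ring
  · refine narrow _ _ (fun s hs => ?_) h' ?_
    · have := hfg s hs
      by_cases hs' : s = s₀ <;> simp [hs'] <;> omega
    · rw [fsum_sub_single, if_pos hs₀]; ring

theorem stmt_16_general (n : ℕ) (f g : ℕ × ℕ → ℤ)
    (hfg : ∀ s ∈ Smn n n, f s ≤ g s) :
    (∃ A : ℕ × ℕ → ℤ, IsASM n A ∧
        ∀ s ∈ Smn n n, f s ≤ A s ∧ A s ≤ g s) ↔
      (∀ X' ⊆ Smn n n, ∀ X'' ⊆ Smn n n,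
        (n : ℤ) + fsum f (X' ∩ X'') -
            fsum g ((Smn n n \ X') ∩ (Smn n n \ X'')) ≤
          (sigma1 X' : ℤ) + (sigma2 X'' : ℤ)) :=
  ⟨fun ⟨_, hA, hfAg⟩ => asmBoundCondition_of_isASM hA hfAg, exists_isASM_of_asmBoundCondition hfg⟩

/-- existence of an alternating sign matrix with entries between
f and g (Theorem AS-feas, condition (B2)). -/
theorem stmt_16 (n : ℕ) (hn : 1 ≤ n) (f g : ℕ × ℕ → ℤ)
    (hfg : ∀ s ∈ Smn n n, f s ≤ g s) :
    (∃ A : ℕ × ℕ → ℤ, IsASM n A ∧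
        ∀ s ∈ Smn n n, f s ≤ A s ∧ A s ≤ g s) ↔
      (∀ X' ⊆ Smn n n, ∀ X'' ⊆ Smn n n,
        (n : ℤ) + fsum f (X' ∩ X'') -
            fsum g ((Smn n n \ X') ∩ (Smn n n \ X'')) ≤
          (sigma1 X' : ℤ) + (sigma2 X'' : ℤ)) :=
  stmt_16_general n f g hfg
end
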